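/- arXiv:1401.7084 — 13 statements merged into one kernel-verified Lean document; each statement's English description precedes it below -/
import Mathlib

section
/- Let A = I − E be an n×n real matrix such that |e_{ij}| ≤ ε for all i ≠ j, |e_{ii}| ≤ δ for 1 ≤ i ≤ n, and δ + (n−1)ε ≤ 1, where δ, ε ≥ 0. Then det(A) ≥ (1 − δ − (n−1)ε)(1 − δ + ε)^{n−1}. -/
/-!
Eliminating the first row and column of `1 - E` with the pivot `a = 1 - E₀₀ ≥ 1 - δ` gives
`det (1 - E) = a * det (1 - E')`, where the Schur complement `1 - E'` has
`E'ᵢⱼ = Eᵢⱼ + Eᵢ₀ E₀ⱼ / a`. So `E'` satisfies the same hypotheses with `δ, ε` replaced by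
`δ + q, ε + q`, `q = ε² / a`; the smallness condition survives because `(n - 1) ε ≤ 1 - δ ≤ a`,
and `1 - δ + ε` is unchanged. Induction on `n` then reduces the bound to the identity
`(1 - δ) (1 - δ - (n - 2) ε) - (n - 1) ε² = (1 - δ - (n - 1) ε) (1 - δ + ε)`.
A zero pivot forces `ε = 0`, so the first row of `1 - E` vanishes and both sides are `0`.
-/

open Matrix

namespace Matrix

section Field

variable {K : Type*} [Field K] {n : ℕ}

theorem det_succ_eq_mul_det_schur (A : Matrix (Fin (n + 1)) (Fin (n + 1)) K) (h : A 0 0 ≠ 0) :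
    A.det = A 0 0 *
      (of fun i j : Fin n => A i.succ j.succ - A i.succ 0 / A 0 0 * A 0 j.succ).det := by
  let c : Fin (n + 1) → K := Fin.cases 0 fun i => A i.succ 0 / A 0 0
  let B : Matrix (Fin (n + 1)) (Fin (n + 1)) K := of fun i j => A i j - c i * A 0 j
  have hB0 : ∀ j, B 0 j = A 0 j := by simp [B, c]
  have hA : A.det = B.det :=
    det_eq_of_forall_row_eq_smul_add_const c 0 rfl fun i j => by simp [hB0, B]
  have hcol : ∀ i : Fin n, B i.succ 0 = 0 := fun i => by simp [B, c, div_mul_cancel₀ _ h]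
  rw [hA, det_succ_column_zero, Fin.sum_univ_succ]
  simp only [hcol, hB0, Fin.succAbove_zero, mul_zero, zero_mul, Finset.sum_const_zero, add_zero,
    Fin.val_zero, pow_zero, one_mul]
  rfl

theorem det_one_sub_succ (E : Matrix (Fin (n + 1)) (Fin (n + 1)) K) (h : E 0 0 ≠ 1) :
    (1 - E).det = (1 - E 0 0) *
      (1 - of fun i j : Fin n => E i.succ j.succ + E i.succ 0 * E 0 j.succ / (1 - E 0 0)).det := by
  rw [det_succ_eq_mul_det_schur _ (by simpa using sub_ne_zero.mpr h.symm)]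
  congr 2
  ext i j
  simp [one_apply, Fin.succ_ne_zero, (Fin.succ_ne_zero _).symm]
  ring

theorem det_one_sub_eq_zero_of_row_eq_single {ι : Type*} [Fintype ι] [DecidableEq ι]
    (E : Matrix ι ι K) (i : ι) (h : E i = Pi.single i 1) : (1 - E).det = 0 :=
  det_eq_zero_of_row_eq_zero i fun j => by
    have hEij := congrFun h j
    rcases eq_or_ne j i with rfl | hji <;> simp_all [Ne.symm]

end Field

variable {K : Type*} [Field K] [LinearOrder K] [IsStrictOrderedRing K]

theorem le_det_one_sub_of_abs_le (m : ℕ) {δ ε : K} (E : Matrix (Fin (m + 1)) (Fin (m + 1)) K)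
    (hsize : δ + m * ε ≤ 1) (hoff : ∀ i j, i ≠ j → |E i j| ≤ ε) (hdiag : ∀ i, |E i i| ≤ δ) :
    (1 - δ - m * ε) * (1 - δ + ε) ^ m ≤ (1 - E).det := by
  induction m generalizing δ ε with
  | zero =>
    rw [det_fin_one, sub_apply, one_apply_eq, Nat.cast_zero, zero_mul, sub_zero, pow_zero, mul_one]
    linarith [le_abs_self (E 0 0), hdiag 0]
  | succ m ih =>
    push_cast at hsize ⊢
    have hε : 0 ≤ ε := (abs_nonneg _).trans (hoff 0 1 (by simp))
    have hgap : (m + 1) * ε ≤ 1 - δ := by linarith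
    have hmε : 0 ≤ (m + 1) * ε := by positivity
    have hpivot : 1 - δ ≤ 1 - E 0 0 := by linarith [le_abs_self (E 0 0), hdiag 0]
    rcases (hpivot.trans' (hmε.trans hgap)).eq_or_lt
      with ha | ha
    · have hε0 : ε = 0 := by nlinarith
      have hδ : δ = 1 := by rw [hε0, mul_zero, add_zero] at hsize; linarith
      have hrow : E 0 = Pi.single 0 1 := funext fun j => by
        rcases eq_or_ne j 0 with rfl | hj
        · simp [eq_of_sub_eq_zero ha.symm]
        · simpa [hj, hε0] using hoff 0 j hj.symm
      rw [det_one_sub_eq_zero_of_row_eq_single E 0 hrow, hδ, hε0]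
      simp
    set a := 1 - E 0 0
    set q := ε * ε / a
    set E' : Matrix (Fin (m + 1)) (Fin (m + 1)) K :=
      of fun i j => E i.succ j.succ + E i.succ 0 * E 0 j.succ / a
    have hcross : ∀ i j : Fin (m + 1), |E i.succ 0 * E 0 j.succ / a| ≤ q := fun i j => by
      rw [abs_div, abs_mul, abs_of_pos ha]
      exact div_le_div_of_nonneg_right (mul_le_mul (hoff _ _ (Fin.succ_ne_zero i))
        (hoff _ _ (Fin.succ_ne_zero j).symm) (abs_nonneg _) hε) ha.le
    have hoff' : ∀ i j, i ≠ j → |E' i j| ≤ ε + q := fun i j hij =>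
      (abs_add_le _ _).trans (add_le_add (hoff _ _ (Fin.succ_injective _ |>.ne hij)) (hcross i j))
    have hdiag' : ∀ i, |E' i i| ≤ δ + q := fun i =>
      (abs_add_le _ _).trans (add_le_add (hdiag _) (hcross i i))
    have hq : (m + 1) * q ≤ ε := by
      rw [← mul_div_assoc, div_le_iff₀ ha]
      nlinarith
    have hdet := ih E' (δ := δ + q) (ε := ε + q) (by linarith) hoff' hdiag'
    rw [det_one_sub_succ E (by linarith)]
    calc (1 - δ - (m + 1) * ε) * (1 - δ + ε) ^ (m + 1)
        = ((1 - δ) * (1 - δ - m * ε) - (m + 1) * ε ^ 2) * (1 - δ + ε) ^ m := by ring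
      _ ≤ (a * (1 - δ - m * ε) - (m + 1) * ε ^ 2) * (1 - δ + ε) ^ m := by
        have : 0 ≤ 1 - δ + ε := by linarith
        gcongr
        linarith
      _ = a * ((1 - (δ + q) - m * (ε + q)) * (1 - (δ + q) + (ε + q)) ^ m) := by
        have haq : a * q = ε * ε := mul_div_cancel₀ _ ha.ne'
        clear_value q
        linear_combination ((m + 1) * (1 - δ + ε) ^ m) * haq
      _ ≤ a * (1 - E').det := by gcongr

end Matrix

theorem det_lower_bound_two_sided_diag_general
    (n : ℕ) (hn : 1 ≤ n) (δ ε : ℝ)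
    (hsize : δ + ((n : ℝ) - 1) * ε ≤ 1)
    (E A : Matrix (Fin n) (Fin n) ℝ)
    (hA : A = 1 - E)
    (hoff : ∀ i j, i ≠ j → |E i j| ≤ ε)
    (hdiag : ∀ i, |E i i| ≤ δ) :
    (1 - δ - ((n : ℝ) - 1) * ε) * (1 - δ + ε) ^ (n - 1) ≤ A.det := by
  obtain ⟨m, rfl⟩ := Nat.exists_eq_add_of_le' hn
  subst hA
  simpa using le_det_one_sub_of_abs_le m E (by simpa using hsize) hoff hdiag

/-- If `A = I - E` is an `n × n` real matrix with `|e i j| ≤ ε` for `i ≠ j`,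
`|e i i| ≤ δ`, and `δ + (n-1) ε ≤ 1` (with `δ, ε ≥ 0`), then
`det A ≥ (1 - δ - (n-1) ε) (1 - δ + ε)^(n-1)`. -/
theorem det_lower_bound_two_sided_diag
    (n : ℕ) (hn : 1 ≤ n) (δ ε : ℝ) (hδ : 0 ≤ δ) (hε : 0 ≤ ε)
    (hsize : δ + ((n : ℝ) - 1) * ε ≤ 1)
    (E A : Matrix (Fin n) (Fin n) ℝ)
    (hA : A = 1 - E)
    (hoff : ∀ i j, i ≠ j → |E i j| ≤ ε)
    (hdiag : ∀ i, |E i i| ≤ δ) :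
    (1 - δ - ((n : ℝ) - 1) * ε) * (1 - δ + ε) ^ (n - 1) ≤ A.det :=
  det_lower_bound_two_sided_diag_general n hn δ ε hsize E A hA hoff hdiag
end

section
/- Let n ≥ 1 and let δ, ε ≥ 0 satisfy δ + (n−1)ε ≤ 1. If F = (δ−ε)I + εJ (the n×n matrix with diagonal entries δ and off-diagonal entries ε), then det(I − F) = (1 − δ − (n−1)ε)(1 − δ + ε)^{n−1}; in particular, the lower bound det(I−E) ≥ (1 − δ − (n−1)ε)(1 − δ + ε)^{n−1} for matrices E with |e_{ij}| ≤ ε (i ≠ j) and |e_{ii}| ≤ δ is attained. -/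
/-!
The all-`b` matrix is the rank-one product of the column `(b, …, b)` and the row `(1, …, 1)`, so
its characteristic polynomial is `X ^ (n - 1)` times that of the `1 × 1` matrix `(n b)`.
Since `I - F = (1 - δ + ε) I - ε J`, its determinant is the characteristic polynomial of `ε J`
evaluated at `1 - δ + ε`; no division is needed, so the case `1 - δ + ε = 0` is not special.
-/

open Matrix Polynomial

theorem Matrix.charpoly_of_const {R ι : Type*} [CommRing R] [Fintype ι] [DecidableEq ι]
    [Nonempty ι] (b : R) :
    (of fun _ _ : ι => b).charpoly = X ^ (Fintype.card ι - 1) * (X - C (Fintype.card ι * b)) := by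
  have hrank_one : (of fun _ _ : ι => b) =
      replicateCol (Fin 1) (fun _ : ι => b) * replicateRow (Fin 1) (fun _ : ι => (1 : R)) := by
    ext i j; simp [mul_apply]
  rw [hrank_one, charpoly_mul_comm_of_le _ _ (by rw [Fintype.card_fin]; exact Fintype.card_pos),
    Fintype.card_fin, charpoly, det_unique, charmatrix_apply_eq,
    replicateRow_mul_replicateCol_apply]
  simp [dotProduct]

theorem Matrix.det_scalar_sub_of_const {R ι : Type*} [CommRing R] [Fintype ι] [DecidableEq ι]
    [Nonempty ι] (a b : R) :
    (scalar ι a - of fun _ _ => b).det = a ^ (Fintype.card ι - 1) * (a - Fintype.card ι * b) := by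
  rw [← eval_charpoly, charpoly_of_const]
  simp

theorem det_lower_bound_two_sided_diag_sharp_general
    (n : ℕ) (hn : 1 ≤ n) (δ ε : ℝ) (hδ : 0 ≤ δ) (hε : 0 ≤ ε)
    (F : Matrix (Fin n) (Fin n) ℝ)
    (hF : F = (δ - ε) • (1 : Matrix (Fin n) (Fin n) ℝ)
            + ε • (Matrix.of fun _ _ => (1 : ℝ))) :
    ((1 : Matrix (Fin n) (Fin n) ℝ) - F).det
        = (1 - δ - ((n : ℝ) - 1) * ε) * (1 - δ + ε) ^ (n - 1)
      ∧ (∀ i j, i ≠ j → |F i j| ≤ ε) ∧ (∀ i, |F i i| ≤ δ) := by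
  have hF_apply (i j : Fin n) : F i j = if i = j then δ else ε := by
    by_cases h : i = j <;> simp [hF, h, one_apply]
  have : Nonempty (Fin n) := ⟨⟨0, hn⟩⟩
  refine ⟨?_, fun i j hij => by simp [hF_apply, hij, abs_of_nonneg hε],
    fun i => by simp [hF_apply, abs_of_nonneg hδ]⟩
  have hI_sub_F : 1 - F = scalar (Fin n) (1 - δ + ε) - of fun _ _ => ε := by
    ext i j
    by_cases h : i = j <;> simp [hF_apply, h, one_apply]
  rw [hI_sub_F, det_scalar_sub_of_const, Fintype.card_fin]
  ring

/-- For `F = (δ - ε) I + ε J` (diagonal entries `δ`, off-diagonal entries `ε`), with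
`δ, ε ≥ 0` and `δ + (n-1) ε ≤ 1`, we have
`det (I - F) = (1 - δ - (n-1) ε) (1 - δ + ε)^(n-1)`; moreover `F` satisfies the
entry bounds `|f i j| ≤ ε` for `i ≠ j` and `|f i i| ≤ δ`, so the lower bound is
attained. -/
theorem det_lower_bound_two_sided_diag_sharp
    (n : ℕ) (hn : 1 ≤ n) (δ ε : ℝ) (hδ : 0 ≤ δ) (hε : 0 ≤ ε)
    (hsize : δ + ((n : ℝ) - 1) * ε ≤ 1)
    (F : Matrix (Fin n) (Fin n) ℝ)
    (hF : F = (δ - ε) • (1 : Matrix (Fin n) (Fin n) ℝ)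
            + ε • (Matrix.of fun _ _ => (1 : ℝ))) :
    ((1 : Matrix (Fin n) (Fin n) ℝ) - F).det
        = (1 - δ - ((n : ℝ) - 1) * ε) * (1 - δ + ε) ^ (n - 1)
      ∧ (∀ i j, i ≠ j → |F i j| ≤ ε) ∧ (∀ i, |F i i| ≤ δ) :=
  det_lower_bound_two_sided_diag_sharp_general n hn δ ε hδ hε F hF
end

section
/- Let A = I − E be an n×n real matrix such that |e_{ij}| ≤ ε for all i ≠ j and e_{ii} ≤ δ for 1 ≤ i ≤ n (a one-sided condition on the diagonal). If 0 ≤ δ ≤ 1 − (n−1)ε, then det(A) ≥ (1 − δ − (n−1)ε)(1 − δ + ε)^{n−1}. -/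
/-!
Eliminating the first row from the others leaves `det A = a₀₀ · det S` with `S` the Schur
complement of the pivot `a₀₀ ≥ d`. Each entry of `S` moves by at most `ε² / d` from the
corresponding entry of `A`, so `S` satisfies the same hypotheses with `d - ε² / d` in place of `d`
and `ε + ε² / d` in place of `ε`. The sum `d + ε` is unchanged and
`d · (d - ε²/d - n (ε + ε²/d)) = (d - (n+1) ε)(d + ε)`, so induction on the size closes.
-/

open Matrix

namespace Matrix

variable {K : Type*} [Field K] {n : ℕ}

def schurComplementZero (A : Matrix (Fin (n + 1)) (Fin (n + 1)) K) : Matrix (Fin n) (Fin n) K :=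
  of fun i j => A i.succ j.succ - A i.succ 0 * A 0 j.succ / A 0 0

theorem det_eq_mul_det_schurComplementZero (A : Matrix (Fin (n + 1)) (Fin (n + 1)) K)
    (h : A 0 0 ≠ 0) : A.det = A 0 0 * A.schurComplementZero.det := by
  let c : Fin (n + 1) → K := Fin.cases 0 fun i => A i.succ 0 / A 0 0
  let B : Matrix (Fin (n + 1)) (Fin (n + 1)) K := of fun i j => A i j - c i * A 0 j
  have hB0 : ∀ j, B 0 j = A 0 j := by simp [B, c]
  have hdet : A.det = B.det :=
    det_eq_of_forall_row_eq_smul_add_const c 0 rfl fun i j => by simp [B, hB0]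
  have hcol : ∀ i : Fin n, B i.succ 0 = 0 := fun i => by
    simp [B, c, div_mul_cancel₀ _ h]
  rw [hdet, det_succ_column_zero, Fin.sum_univ_succ]
  simp only [hcol, mul_zero, zero_mul, Finset.sum_const_zero, add_zero, hB0]
  rw [Fin.val_zero, pow_zero, one_mul]
  congr 2
  ext i j
  simp [B, c, schurComplementZero, div_mul_eq_mul_div]

end Matrix

section OrderedField

variable {K : Type*} [Field K] [LinearOrder K] [IsStrictOrderedRing K]

theorem abs_schurComplementZero_sub_le {n : ℕ} {d ε : K} (hd : 0 < d)
    (A : Matrix (Fin (n + 1)) (Fin (n + 1)) K) (hpivot : d ≤ A 0 0)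
    (hcol : ∀ i : Fin n, |A i.succ 0| ≤ ε) (hrow : ∀ j : Fin n, |A 0 j.succ| ≤ ε)
    (i j : Fin n) : |A.schurComplementZero i j - A i.succ j.succ| ≤ ε ^ 2 / d := by
  have hε : 0 ≤ ε := (abs_nonneg _).trans (hcol i)
  have hprod : |A i.succ 0 * A 0 j.succ| ≤ ε ^ 2 := by
    rw [abs_mul, sq]
    exact mul_le_mul (hcol i) (hrow j) (abs_nonneg _) hε
  calc |A.schurComplementZero i j - A i.succ j.succ|
      = |A i.succ 0 * A 0 j.succ| / A 0 0 := by
        simp [schurComplementZero, abs_div, abs_of_pos (hd.trans_le hpivot)]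
    _ ≤ ε ^ 2 / A 0 0 := by gcongr; exact hd.le.trans hpivot
    _ ≤ ε ^ 2 / d := by gcongr

theorem le_det_of_le_diag_of_abs_offDiag_le (n : ℕ) {d ε : K} (hd : n * ε ≤ d)
    (A : Matrix (Fin (n + 1)) (Fin (n + 1)) K) (hdiag : ∀ i, d ≤ A i i)
    (hoff : ∀ i j, i ≠ j → |A i j| ≤ ε) : (d - n * ε) * (d + ε) ^ n ≤ A.det := by
  induction n generalizing d ε with
  | zero => simpa using hdiag 0
  | succ n ih =>
    have hε : 0 ≤ ε := (abs_nonneg _).trans (hoff 0 1 zero_ne_one)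
    push_cast at hd ⊢
    have hd0 : 0 ≤ d := by nlinarith
    rcases hd0.eq_or_lt with rfl | hdpos
    · have hε0 : ε = 0 := by nlinarith
      have hdiagonal : A.IsDiag := fun i j hij => abs_nonpos_iff.mp (hε0 ▸ hoff i j hij)
      rw [← hdiagonal.diagonal_diag, det_diagonal, hε0]
      simpa using Finset.prod_nonneg fun i _ => hdiag i
    · set S := A.schurComplementZero
      have hcorr := abs_schurComplementZero_sub_le hdpos A (hdiag 0)
        (fun i => hoff _ _ (Fin.succ_ne_zero i)) (fun j => hoff _ _ (Fin.succ_ne_zero j).symm)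
      have hSdiag : ∀ i, d - ε ^ 2 / d ≤ S i i := fun i => by
        linarith [(abs_le.mp (hcorr i i)).1, hdiag i.succ]
      have hSoff : ∀ i j, i ≠ j → |S i j| ≤ ε + ε ^ 2 / d := fun i j hij => by
        linarith [abs_sub_abs_le_abs_sub (S i j) (A i.succ j.succ), hcorr i j,
          hoff _ _ (Fin.succ_injective _ |>.ne hij)]
      have hfactor :
          d * (d - ε ^ 2 / d - n * (ε + ε ^ 2 / d)) = (d - (n + 1) * ε) * (d + ε) := by
        field_simp
        ring
      have hsize : 0 ≤ d - ε ^ 2 / d - n * (ε + ε ^ 2 / d) :=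
        le_of_mul_le_mul_left (by rw [mul_zero, hfactor]; nlinarith) hdpos
      have hpivot : 0 < A 0 0 := hdpos.trans_le (hdiag 0)
      have hS := ih (sub_nonneg.mp hsize) S hSdiag hSoff
      rw [show d - ε ^ 2 / d + (ε + ε ^ 2 / d) = d + ε by ring] at hS
      calc (d - (n + 1) * ε) * (d + ε) ^ (n + 1)
          = d * ((d - ε ^ 2 / d - n * (ε + ε ^ 2 / d)) * (d + ε) ^ n) := by
            rw [← mul_assoc, hfactor]; ring
        _ ≤ A 0 0 * S.det := mul_le_mul (hdiag 0) hS (by positivity) hpivot.le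
        _ = A.det := (det_eq_mul_det_schurComplementZero A hpivot.ne').symm

end OrderedField

theorem det_lower_bound_one_sided_diag_general
    (n : ℕ) (hn : 1 ≤ n) (δ ε : ℝ)
    (hsize : δ ≤ 1 - ((n : ℝ) - 1) * ε)
    (E A : Matrix (Fin n) (Fin n) ℝ)
    (hA : A = 1 - E)
    (hoff : ∀ i j, i ≠ j → |E i j| ≤ ε)
    (hdiag : ∀ i, E i i ≤ δ) :
    (1 - δ - ((n : ℝ) - 1) * ε) * (1 - δ + ε) ^ (n - 1) ≤ A.det := by
  obtain ⟨m, rfl⟩ : ∃ m, n = m + 1 := ⟨n - 1, (Nat.sub_add_cancel hn).symm⟩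
  have hcast : ((m + 1 : ℕ) : ℝ) - 1 = m := by push_cast; ring
  rw [hcast] at hsize ⊢
  subst hA
  refine le_det_of_le_diag_of_abs_offDiag_le m (by linarith) _ (fun i => ?_) (fun i j hij => ?_)
  · simp only [Matrix.sub_apply, one_apply_eq]; linarith [hdiag i]
  · simpa [one_apply_ne hij] using hoff i j hij

/-- One-sided diagonal condition: if `A = I - E` with `|e i j| ≤ ε` for `i ≠ j`,
`e i i ≤ δ` (only an upper bound on the diagonal), and `0 ≤ δ ≤ 1 - (n-1) ε`, then
`det A ≥ (1 - δ - (n-1) ε) (1 - δ + ε)^(n-1)`. -/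
theorem det_lower_bound_one_sided_diag
    (n : ℕ) (hn : 1 ≤ n) (δ ε : ℝ) (hε : 0 ≤ ε)
    (hδ : 0 ≤ δ) (hsize : δ ≤ 1 - ((n : ℝ) - 1) * ε)
    (E A : Matrix (Fin n) (Fin n) ℝ)
    (hA : A = 1 - E)
    (hoff : ∀ i j, i ≠ j → |E i j| ≤ ε)
    (hdiag : ∀ i, E i i ≤ δ) :
    (1 - δ - ((n : ℝ) - 1) * ε) * (1 - δ + ε) ^ (n - 1) ≤ A.det :=
  det_lower_bound_one_sided_diag_general n hn δ ε hsize E A hA hoff hdiag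
end

section
/- If A = I − E is an n×n real matrix with |e_{ij}| ≤ ε for all 1 ≤ i,j ≤ n, e_{ii} = 0 for 1 ≤ i ≤ n, and (n−1)ε ≤ 1, then det(A) ≥ (1 − (n−1)ε)(1 + ε)^{n−1}. -/
/-!
Induction on the order, bordering a matrix `A = I - E'` of order `m` by one row and column.
By the Schur complement, `det [[A, -b], [-cᵀ, 1]] = det A * (1 - cᵀ A⁻¹ b)`. The solution of
`A x = b` satisfies `x = b + E' x`, and as `E'` has zero diagonal each row of `E'` has at most
`m - 1` nonzero entries, so `‖x‖∞ (1 - (m - 1) ε) ≤ ε`. Hence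
`(1 - cᵀ x) (1 - (m - 1) ε) ≥ 1 - (m - 1) ε - m ε² = (1 + ε) (1 - m ε)`, which is exactly the ratio
of the bounds for orders `m + 1` and `m`. The bound is attained at `E = ε (J - I)`.
-/

open Matrix Finset

/-- `(1 + ε)` times the determinant of `I - ε (J - I)` of order `m`, which is the bound of the
theorem; the extra factor makes it meaningful (equal to `1`) also for `m = 0`. -/
def detBound (ε : ℝ) (m : ℕ) : ℝ := (1 - ((m : ℝ) - 1) * ε) * (1 + ε) ^ m

theorem detBound_succ_le {ε s d : ℝ} {m : ℕ} (hε : 0 ≤ ε) (hm : m * ε ≤ 1)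
    (hs : s * (1 - ((m : ℝ) - 1) * ε) ≤ m * ε ^ 2) (hd : detBound ε m ≤ (1 + ε) * d) :
    detBound ε (m + 1) ≤ (1 + ε) * (d * (1 - s)) := by
  have hp : 0 < 1 - ((m : ℝ) - 1) * ε := by nlinarith
  have hfactor : (1 - m * ε) * (1 + ε) ≤ (1 - ((m : ℝ) - 1) * ε) * (1 - s) := by nlinarith
  have hs1 : 0 ≤ 1 - s := by nlinarith
  calc detBound ε (m + 1) = (1 - m * ε) * (1 + ε) * (1 + ε) ^ m := by
        rw [detBound, pow_succ]; push_cast; ring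
    _ ≤ (1 - ((m : ℝ) - 1) * ε) * (1 - s) * (1 + ε) ^ m := by gcongr
    _ = detBound ε m * (1 - s) := by rw [detBound]; ring
    _ ≤ (1 + ε) * (d * (1 - s)) := by rw [← mul_assoc]; gcongr

namespace Matrix

variable {ι : Type*} [Fintype ι] {ε : ℝ}

theorem abs_dotProduct_le {c : ι → ℝ} (hc : ∀ j, |c j| ≤ ε) (x : ι → ℝ) :
    |c ⬝ᵥ x| ≤ Fintype.card ι * ε * ‖x‖ := by
  calc |c ⬝ᵥ x| ≤ ∑ j, |c j| * |x j| := by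
        simpa only [dotProduct, abs_mul] using abs_sum_le_sum_abs (fun j => c j * x j) univ
    _ ≤ ∑ _j : ι, ε * ‖x‖ := sum_le_sum fun j _ =>
        mul_le_mul (hc j) (norm_le_pi_norm x j) (abs_nonneg _) ((abs_nonneg _).trans (hc j))
    _ = Fintype.card ι * ε * ‖x‖ := by rw [sum_const, card_univ, nsmul_eq_mul, mul_assoc]

variable [DecidableEq ι]

theorem abs_mulVec_apply_le_of_diag_eq_zero {F : Matrix ι ι ℝ} (hF : ∀ i j, |F i j| ≤ ε)
    (hdiag : ∀ i, F i i = 0) (x : ι → ℝ) (i : ι) :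
    |(F *ᵥ x) i| ≤ ((Fintype.card ι : ℝ) - 1) * ε * ‖x‖ := by
  have hε : 0 ≤ ε := (abs_nonneg _).trans (hF i i)
  calc |(F *ᵥ x) i| = |∑ j ∈ univ.erase i, F i j * x j| := by
        rw [mulVec, dotProduct, ← sum_erase_add _ _ (mem_univ i), hdiag, zero_mul, add_zero]
    _ ≤ ∑ j ∈ univ.erase i, |F i j| * |x j| := by
        simpa only [abs_mul] using abs_sum_le_sum_abs (fun j => F i j * x j) (univ.erase i)
    _ ≤ ∑ _j ∈ univ.erase i, ε * ‖x‖ :=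
        sum_le_sum fun j _ => mul_le_mul (hF i j) (norm_le_pi_norm x j) (abs_nonneg _) hε
    _ = ((Fintype.card ι : ℝ) - 1) * ε * ‖x‖ := by
        rw [sum_const, card_erase_of_mem (mem_univ i), card_univ, nsmul_eq_mul,
          Nat.cast_pred (Fintype.card_pos_iff.2 ⟨i⟩), mul_assoc]

theorem norm_mulVec_le_of_diag_eq_zero {F : Matrix ι ι ℝ} (hF : ∀ i j, |F i j| ≤ ε)
    (hdiag : ∀ i, F i i = 0) (x : ι → ℝ) :
    ‖F *ᵥ x‖ ≤ ((Fintype.card ι : ℝ) - 1) * ε * ‖x‖ := by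
  cases isEmpty_or_nonempty ι
  · simp [Subsingleton.elim x 0]
  · exact (pi_norm_le_iff_of_nonempty _).2 (abs_mulVec_apply_le_of_diag_eq_zero hF hdiag x)

theorem norm_mul_le_of_one_sub_mulVec_eq {F : Matrix ι ι ℝ}
    (hF : ∀ i j, |F i j| ≤ ε) (hdiag : ∀ i, F i i = 0) {x b : ι → ℝ} (hx : (1 - F) *ᵥ x = b) :
    ‖x‖ * (1 - ((Fintype.card ι : ℝ) - 1) * ε) ≤ ‖b‖ := by
  have hxb : x = b + F *ᵥ x := by rw [← hx, sub_mulVec, one_mulVec, sub_add_cancel]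
  have hx_le : ‖x‖ ≤ ‖b‖ + ‖F *ᵥ x‖ := by
    calc ‖x‖ = ‖b + F *ᵥ x‖ := congrArg norm hxb
      _ ≤ ‖b‖ + ‖F *ᵥ x‖ := norm_add_le _ _
  linarith [norm_mulVec_le_of_diag_eq_zero hF hdiag x]

variable {α β : Type*} [Fintype α] [DecidableEq α] [Fintype β] [DecidableEq β] [Unique β]

theorem det_one_sub_sum_unique {E : Matrix (α ⊕ β) (α ⊕ β) ℝ}
    (hdiag : E (.inr default) (.inr default) = 0) [Invertible (1 - E.toBlocks₁₁)] :
    (1 - E).det = (1 - E.toBlocks₁₁).det *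
      (1 - (fun j => E (.inr default) (.inl j)) ⬝ᵥ
        ((1 - E.toBlocks₁₁)⁻¹ *ᵥ fun i => E (.inl i) (.inr default))) := by
  have hblocks : 1 - E = fromBlocks (1 - E.toBlocks₁₁) (-E.toBlocks₁₂) (-E.toBlocks₂₁)
      (1 - E.toBlocks₂₂) := by
    conv_lhs => rw [← fromBlocks_toBlocks E, ← fromBlocks_one, sub_eq_add_neg, fromBlocks_neg,
      fromBlocks_add]
    simp only [← sub_eq_add_neg, zero_sub]
  rw [hblocks, det_fromBlocks₁₁, det_unique (n := β), invOf_eq_nonsing_inv]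
  congr 1
  simp only [toBlocks₂₂, toBlocks₂₁, toBlocks₁₂, neg_of, sub_apply, one_apply_eq, of_apply, hdiag,
    sub_zero, mul_apply, Pi.neg_apply, neg_mul, sum_neg_distrib, mul_neg, sum_mul, mul_assoc,
    neg_neg, dotProduct, mulVec, mul_sum, sub_right_inj]
  exact sum_comm

theorem detBound_succ_le_of_sum_unique {E : Matrix (α ⊕ β) (α ⊕ β) ℝ} (hE : ∀ i j, |E i j| ≤ ε)
    (hdiag : ∀ i, E i i = 0) (hsize : Fintype.card α * ε ≤ 1)
    (hblock : detBound ε (Fintype.card α) ≤ (1 + ε) * (1 - E.toBlocks₁₁).det) :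
    detBound ε (Fintype.card α + 1) ≤ (1 + ε) * (1 - E).det := by
  have hε : 0 ≤ ε := (abs_nonneg _).trans (hE (.inr default) (.inr default))
  set A := 1 - E.toBlocks₁₁
  have hp : 0 < 1 - ((Fintype.card α : ℝ) - 1) * ε := by nlinarith
  have hA : 0 < A.det := by
    have : 0 < detBound ε (Fintype.card α) := by unfold detBound; positivity
    nlinarith
  have : Invertible A := invertibleOfIsUnitDet A (isUnit_iff_ne_zero.2 hA.ne')
  rw [det_one_sub_sum_unique (hdiag _)]
  set b : α → ℝ := fun i => E (.inl i) (.inr default)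
  set c : α → ℝ := fun j => E (.inr default) (.inl j)
  set x := A⁻¹ *ᵥ b
  have hx : (1 - E.toBlocks₁₁) *ᵥ x = b := by
    rw [mulVec_mulVec, mul_inv_of_invertible, one_mulVec]
  have hx_norm := norm_mul_le_of_one_sub_mulVec_eq (F := E.toBlocks₁₁) (fun i j => hE _ _)
    (fun i => hdiag _) hx
  have hb : ‖b‖ ≤ ε := (pi_norm_le_iff_of_nonneg hε).2 fun i => hE _ _
  have hcx := abs_dotProduct_le (c := c) (fun j => hE _ _) x
  refine detBound_succ_le hε hsize ?_ hblock
  calc c ⬝ᵥ x * (1 - ((Fintype.card α : ℝ) - 1) * ε)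
      ≤ Fintype.card α * ε * ‖x‖ * (1 - ((Fintype.card α : ℝ) - 1) * ε) := by
        gcongr; exact (le_abs_self _).trans hcx
    _ ≤ Fintype.card α * ε ^ 2 := by
        rw [mul_assoc, sq, mul_assoc]; gcongr; linarith

end Matrix

theorem detBound_le_mul_det_one_sub {ε : ℝ} (n : ℕ) (E : Matrix (Fin n) (Fin n) ℝ)
    (hE : ∀ i j, |E i j| ≤ ε) (hdiag : ∀ i, E i i = 0) (hsize : ((n : ℝ) - 1) * ε ≤ 1) :
    detBound ε n ≤ (1 + ε) * (1 - E).det := by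
  induction n with
  | zero => simp [detBound]
  | succ n ih =>
    have hε : 0 ≤ ε := (abs_nonneg _).trans (hE 0 0)
    let e : Fin n ⊕ Fin 1 ≃ Fin (n + 1) := finSumFinEquiv
    have hdet : (1 - E.submatrix e e).det = (1 - E).det := by
      rw [← submatrix_one_equiv e]
      exact det_submatrix_equiv_self e (1 - E)
    have hsize' : ((n : ℝ) - 1) * ε ≤ 1 := by push_cast at hsize; linarith
    have := detBound_succ_le_of_sum_unique (E := E.submatrix e e) (fun i j => hE _ _)
      (fun i => hdiag _) (by push_cast at hsize; simpa using hsize)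
      (by simpa using
        ih (E.submatrix e e).toBlocks₁₁ (fun i j => hE _ _) (fun i => hdiag _) hsize')
    rwa [hdet, Fintype.card_fin] at this

/-- If `A = I - E` with `|e i j| ≤ ε` for all `i, j`, zero diagonal `e i i = 0`, and
`(n-1) ε ≤ 1`, then `det A ≥ (1 - (n-1) ε) (1 + ε)^(n-1)`. -/
theorem det_lower_bound_zero_diag
    (n : ℕ) (hn : 1 ≤ n) (ε : ℝ) (hε : 0 ≤ ε)
    (hsize : ((n : ℝ) - 1) * ε ≤ 1)
    (E A : Matrix (Fin n) (Fin n) ℝ)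
    (hA : A = 1 - E)
    (hE : ∀ i j, |E i j| ≤ ε)
    (hdiag : ∀ i, E i i = 0) :
    (1 - ((n : ℝ) - 1) * ε) * (1 + ε) ^ (n - 1) ≤ A.det := by
  have hbound : (1 + ε) * ((1 - ((n : ℝ) - 1) * ε) * (1 + ε) ^ (n - 1)) = detBound ε n := by
    rw [detBound, ← pow_sub_one_mul (by omega : n ≠ 0)]; ring
  subst hA
  exact le_of_mul_le_mul_left (hbound ▸ detBound_le_mul_det_one_sub n E hE hdiag hsize)
    (by positivity)
end

section
/- If A is an n×n real matrix satisfying |a_{ij}| ≤ ε·|a_{ii}| for all i ≠ j, 1 ≤ i,j ≤ n, where ε ≥ 0, then |det(A)| ≥ (∏_{i=1}^n |a_{ii}|) · (1 − (n−1)²ε²). -/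
/-!
Eliminating the first row and column gives `det A = a₀₀ · det S` with `S` the Schur complement
of `a₀₀`. If the off-diagonal ratio of `A` is `ε < 1`, the diagonal of `S` loses at most a factor
`1 - ε²` and the off-diagonal ratio of `S` is at most `ε / (1 - ε)`. Induction on the size then
gives Ostrowski's bound `|det A| ≥ ∏ |aᵢᵢ| · (1 - (n-1)ε)(1+ε)^(n-1)`, and Bernoulli's inequality
`(1+ε)^(n-1) ≥ 1 + (n-1)ε` turns it into the quadratic bound.
-/

open Finset

section Scalar

variable {K : Type*} [Field K] [LinearOrder K] [IsStrictOrderedRing K]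

theorem abs_div_mul_le_sq_mul {a b c d ε : K} (hε : 0 ≤ ε) (hb : |b| ≤ ε * |a|)
    (hc : |c| ≤ ε * |d|) : |b / d * c| ≤ ε ^ 2 * |a| := by
  rcases eq_or_ne d 0 with rfl | hd
  · simp only [div_zero, zero_mul, abs_zero]; positivity
  rw [abs_mul, abs_div, div_mul_eq_mul_div, div_le_iff₀ (abs_pos.mpr hd)]
  calc |b| * |c| ≤ (ε * |a|) * (ε * |d|) := by gcongr
    _ = ε ^ 2 * |a| * |d| := by ring

theorem one_sub_sq_pow_mul_eq {ε : K} (hε : ε ≠ 1) (m : ℕ) :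
    (1 - ε ^ 2) ^ (m + 1) * ((1 - m * (ε / (1 - ε))) * (1 + ε / (1 - ε)) ^ m) =
      (1 - (m + 1) * ε) * (1 + ε) ^ (m + 1) := by
  have h : 1 - ε ≠ 0 := sub_ne_zero.mpr hε.symm
  have h1 : 1 + ε / (1 - ε) = (1 - ε)⁻¹ := by field_simp; ring
  have h2 : 1 - m * (ε / (1 - ε)) = (1 - (m + 1) * ε) / (1 - ε) := by field_simp; ring
  rw [h1, h2, show 1 - ε ^ 2 = (1 - ε) * (1 + ε) by ring, mul_pow, inv_pow]
  field_simp
  ring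

theorem one_sub_sq_mul_sq_le {ε : K} (hε : 0 ≤ ε) {m : ℕ} (hm : m * ε ≤ 1) :
    1 - (m : K) ^ 2 * ε ^ 2 ≤ (1 - m * ε) * (1 + ε) ^ m :=
  calc 1 - (m : K) ^ 2 * ε ^ 2 = (1 - m * ε) * (1 + m * ε) := by ring
    _ ≤ (1 - m * ε) * (1 + ε) ^ m :=
      mul_le_mul_of_nonneg_left (one_add_mul_le_pow (by linarith) m) (by linarith)

end Scalar

namespace Matrix

variable {K : Type*} [Field K]

def schurFirst {m : ℕ} (A : Matrix (Fin (m + 1)) (Fin (m + 1)) K) :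
    Matrix (Fin m) (Fin m) K :=
  of fun i j => A i.succ j.succ - A i.succ 0 / A 0 0 * A 0 j.succ

theorem det_eq_mul_det_schurFirst {m : ℕ} (A : Matrix (Fin (m + 1)) (Fin (m + 1)) K)
    (h : A 0 0 ≠ 0) : A.det = A 0 0 * A.schurFirst.det := by
  set c : Fin (m + 1) → K := Fin.cons 0 fun i => A i.succ 0 / A 0 0
  set B : Matrix (Fin (m + 1)) (Fin (m + 1)) K := of fun i j => A i j - c i * A 0 j
  have hB : A.det = B.det :=
    det_eq_of_forall_row_eq_smul_add_const c 0 rfl fun i j => by simp [B, c]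
  have hcol : ∀ i : Fin m, B i.succ 0 = 0 := fun i => by simp [B, c, h]
  rw [hB, det_succ_column_zero, Fin.sum_univ_succ]
  simp only [hcol, mul_zero, zero_mul, sum_const_zero, add_zero]
  simp [B, c, schurFirst, submatrix]

variable [LinearOrder K] [IsStrictOrderedRing K]

def IsDiagDominantBy {n : Type*} (ε : K) (A : Matrix n n K) : Prop :=
  ∀ i j, i ≠ j → |A i j| ≤ ε * |A i i|

section SchurFirst

variable {m : ℕ} {ε : K} {A : Matrix (Fin (m + 1)) (Fin (m + 1)) K}

theorem IsDiagDominantBy.abs_div_mul_le (hε : 0 ≤ ε) (hA : A.IsDiagDominantBy ε) (i j : Fin m) :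
    |A i.succ 0 / A 0 0 * A 0 j.succ| ≤ ε ^ 2 * |A i.succ i.succ| :=
  abs_div_mul_le_sq_mul hε (hA _ _ (Fin.succ_ne_zero i)) (hA _ _ (Fin.succ_ne_zero j).symm)

theorem IsDiagDominantBy.one_sub_sq_mul_le_abs_schurFirst (hε : 0 ≤ ε)
    (hA : A.IsDiagDominantBy ε) (i : Fin m) :
    (1 - ε ^ 2) * |A i.succ i.succ| ≤ |A.schurFirst i i| := by
  have := abs_sub_abs_le_abs_sub (A i.succ i.succ) (A i.succ 0 / A 0 0 * A 0 i.succ)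
  simp only [schurFirst, of_apply]
  linarith [hA.abs_div_mul_le hε i i]

theorem IsDiagDominantBy.abs_schurFirst_le (hε : 0 ≤ ε) (hA : A.IsDiagDominantBy ε)
    {i j : Fin m} (hij : i ≠ j) :
    |A.schurFirst i j| ≤ ε * (1 + ε) * |A i.succ i.succ| := by
  have := abs_sub (A i.succ j.succ) (A i.succ 0 / A 0 0 * A 0 j.succ)
  simp only [schurFirst, of_apply]
  linarith [hA.abs_div_mul_le hε i j, hA _ _ (Fin.succ_injective _ |>.ne hij)]

theorem IsDiagDominantBy.one_sub_sq_pow_mul_prod_le_prod_abs_schurFirst (hε : 0 ≤ ε)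
    (hε1 : ε ≤ 1) (hA : A.IsDiagDominantBy ε) :
    (1 - ε ^ 2) ^ m * ∏ i : Fin m, |A i.succ i.succ| ≤ ∏ i, |A.schurFirst i i| := by
  have := prod_le_prod (fun i _ => mul_nonneg (by nlinarith) (abs_nonneg _))
    fun i (_ : i ∈ univ) => hA.one_sub_sq_mul_le_abs_schurFirst hε i
  rwa [prod_mul_distrib, prod_const, card_univ, Fintype.card_fin] at this

theorem IsDiagDominantBy.schurFirst (hε : 0 ≤ ε) (hε1 : ε < 1) (hA : A.IsDiagDominantBy ε) :
    A.schurFirst.IsDiagDominantBy (ε / (1 - ε)) := by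
  intro i j hij
  have h1ε : 0 < 1 - ε := by linarith
  calc |A.schurFirst i j| ≤ ε * (1 + ε) * |A i.succ i.succ| := hA.abs_schurFirst_le hε hij
    _ = ε / (1 - ε) * ((1 - ε ^ 2) * |A i.succ i.succ|) := by field_simp; ring
    _ ≤ ε / (1 - ε) * |A.schurFirst i i| := by
      gcongr
      exact hA.one_sub_sq_mul_le_abs_schurFirst hε i

end SchurFirst

theorem IsDiagDominantBy.prod_abs_diag_mul_le_abs_det :
    ∀ {m : ℕ} {ε : K} {A : Matrix (Fin (m + 1)) (Fin (m + 1)) K}, 0 ≤ ε → A.IsDiagDominantBy ε →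
      (∏ i, |A i i|) * ((1 - m * ε) * (1 + ε) ^ m) ≤ |A.det|
  | 0, ε, A, _, _ => by simp
  | m + 1, ε, A, hε, hA => by
    have hprod_nonneg : 0 ≤ ∏ i, |A i i| := prod_nonneg fun i _ => abs_nonneg _
    by_cases hsmall : ((m + 1 : ℕ) : K) * ε < 1
    swap
    · have : (1 - ((m + 1 : ℕ) : K) * ε) * (1 + ε) ^ (m + 1) ≤ 0 :=
        mul_nonpos_of_nonpos_of_nonneg (by linarith) (by positivity)
      exact (mul_nonpos_of_nonneg_of_nonpos hprod_nonneg this).trans (abs_nonneg _)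
    rcases eq_or_ne (A 0 0) 0 with h00 | h00
    · simp [Fin.prod_univ_succ, h00]
    push_cast at hsmall ⊢
    have hε1 : ε < 1 := by nlinarith [(m.cast_nonneg : (0 : K) ≤ m)]
    set ε' := ε / (1 - ε)
    have hε' : 0 ≤ ε' := div_nonneg hε (by linarith)
    have hfactor : 0 ≤ (1 - m * ε') * (1 + ε') ^ m := by
      have : (m : K) * ε' ≤ 1 := by
        rw [← mul_div_assoc, div_le_one (by linarith)]; linarith
      have : 0 ≤ 1 + ε' := by linarith
      positivity
    calc (∏ i, |A i i|) * ((1 - (m + 1) * ε) * (1 + ε) ^ (m + 1))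
        = |A 0 0| * (((1 - ε ^ 2) ^ (m + 1) * ∏ i : Fin (m + 1), |A i.succ i.succ|) *
            ((1 - m * ε') * (1 + ε') ^ m)) := by
          rw [Fin.prod_univ_succ, ← one_sub_sq_pow_mul_eq hε1.ne]; ring
      _ ≤ |A 0 0| * ((∏ i, |A.schurFirst i i|) * ((1 - m * ε') * (1 + ε') ^ m)) := by
          gcongr
          exact hA.one_sub_sq_pow_mul_prod_le_prod_abs_schurFirst hε hε1.le
      _ ≤ |A 0 0| * |A.schurFirst.det| := by
          gcongr
          exact (hA.schurFirst hε hε1).prod_abs_diag_mul_le_abs_det hε'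
      _ = |A.det| := by rw [det_eq_mul_det_schurFirst A h00, abs_mul]

theorem IsDiagDominantBy.prod_abs_diag_mul_one_sub_sq_le_abs_det {m : ℕ} {ε : K}
    {A : Matrix (Fin (m + 1)) (Fin (m + 1)) K} (hε : 0 ≤ ε) (hA : A.IsDiagDominantBy ε) :
    (∏ i, |A i i|) * (1 - (m : K) ^ 2 * ε ^ 2) ≤ |A.det| := by
  have hprod_nonneg : 0 ≤ ∏ i, |A i i| := prod_nonneg fun i _ => abs_nonneg _
  by_cases hsmall : (m : K) * ε ≤ 1
  · calc (∏ i, |A i i|) * (1 - (m : K) ^ 2 * ε ^ 2)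
        ≤ (∏ i, |A i i|) * ((1 - m * ε) * (1 + ε) ^ m) := by
          gcongr; exact one_sub_sq_mul_sq_le hε hsmall
      _ ≤ |A.det| := hA.prod_abs_diag_mul_le_abs_det hε
  · have : 1 - (m : K) ^ 2 * ε ^ 2 ≤ 0 := by nlinarith
    exact (mul_nonpos_of_nonneg_of_nonpos hprod_nonneg this).trans (abs_nonneg _)

end Matrix

theorem abs_det_lower_bound_diag_dominant_quadratic_general
    (n : ℕ) (ε : ℝ) (hε : 0 ≤ ε)
    (A : Matrix (Fin n) (Fin n) ℝ)
    (hA : ∀ i j, i ≠ j → |A i j| ≤ ε * |A i i|) :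
    (∏ i, |A i i|) * (1 - ((n : ℝ) - 1) ^ 2 * ε ^ 2) ≤ |A.det| := by
  cases n with
  | zero => simp [sq_nonneg]
  | succ m =>
    simpa using Matrix.IsDiagDominantBy.prod_abs_diag_mul_one_sub_sq_le_abs_det hε hA

/-- If `A` is an `n × n` real matrix with `|a i j| ≤ ε |a i i|` for all `i ≠ j`,
where `ε ≥ 0`, then `|det A| ≥ (∏ i, |a i i|) (1 - (n-1)² ε²)`. -/
theorem abs_det_lower_bound_diag_dominant_quadratic
    (n : ℕ) (hn : 1 ≤ n) (ε : ℝ) (hε : 0 ≤ ε)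
    (A : Matrix (Fin n) (Fin n) ℝ)
    (hA : ∀ i j, i ≠ j → |A i j| ≤ ε * |A i i|) :
    (∏ i, |A i i|) * (1 - ((n : ℝ) - 1) ^ 2 * ε ^ 2) ≤ |A.det| :=
  abs_det_lower_bound_diag_dominant_quadratic_general n ε hε A hA
end

section
/- If A = I − E is an n×n real matrix with |e_{ij}| ≤ ε for all 1 ≤ i,j ≤ n, where ε ≥ 0, then det(A) ≤ (1 + 2ε + nε²)^{n/2}. No upper restriction on ε is required. -/
/-!
Since `(det A)² = det (A Aᵀ)` and `A Aᵀ` is positive semidefinite, AM-GM on its eigenvalues gives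
`(det A)² ≤ (tr (A Aᵀ) / n) ^ n`, a weak form of Hadamard's inequality. Here `tr (A Aᵀ)` is the sum
of the squared entries of `A`, and every row of `I - E` has squared norm at most
`(1 + ε)² + (n - 1) ε² = 1 + 2ε + nε²`.
-/

open Matrix Finset

theorem Real.prod_le_sum_div_card_pow {ι : Type*} (s : Finset ι) {z : ι → ℝ}
    (hz : ∀ i ∈ s, 0 ≤ z i) : ∏ i ∈ s, z i ≤ ((∑ i ∈ s, z i) / #s) ^ #s := by
  rcases s.eq_empty_or_nonempty with rfl | hs
  · simp
  have hcard : (0 : ℝ) < #s := by exact_mod_cast hs.card_pos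
  have amgm := Real.geom_mean_le_arith_mean s (fun _ ↦ 1) z (fun _ _ ↦ zero_le_one)
    (by simpa using hcard) hz
  simp only [Real.rpow_one, sum_const, nsmul_eq_mul, mul_one, one_mul] at amgm
  have hprod : 0 ≤ ∏ i ∈ s, z i := prod_nonneg hz
  calc ∏ i ∈ s, z i = ((∏ i ∈ s, z i) ^ (#s : ℝ)⁻¹) ^ #s := by
        rw [← Real.rpow_natCast, ← Real.rpow_mul hprod, inv_mul_cancel₀ hcard.ne', Real.rpow_one]
    _ ≤ ((∑ i ∈ s, z i) / #s) ^ #s := by gcongr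

theorem Matrix.PosSemidef.det_le_trace_div_card_pow {ι : Type*} [Fintype ι] [DecidableEq ι]
    {M : Matrix ι ι ℝ} (hM : M.PosSemidef) :
    M.det ≤ (M.trace / Fintype.card ι) ^ Fintype.card ι := by
  have h := Real.prod_le_sum_div_card_pow univ fun i _ ↦ hM.eigenvalues_nonneg i
  rw [card_univ] at h
  simpa [hM.isHermitian.det_eq_prod_eigenvalues, hM.isHermitian.trace_eq_sum_eigenvalues] using h

theorem Matrix.trace_mul_transpose_self {m n R : Type*} [Fintype m] [Fintype n] [CommSemiring R]
    (A : Matrix m n R) : (A * Aᵀ).trace = ∑ i, ∑ j, A i j ^ 2 := by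
  simp [trace, mul_apply, sq]

theorem Matrix.det_sq_le_sum_sq_div_card_pow {ι : Type*} [Fintype ι] [DecidableEq ι]
    (A : Matrix ι ι ℝ) :
    A.det ^ 2 ≤ ((∑ i, ∑ j, A i j ^ 2) / Fintype.card ι) ^ Fintype.card ι := by
  have hpsd : (A * Aᵀ).PosSemidef := by
    simpa using posSemidef_self_mul_conjTranspose A
  calc A.det ^ 2 = (A * Aᵀ).det := by rw [det_mul, det_transpose, sq]
    _ ≤ _ := by simpa only [trace_mul_transpose_self] using hpsd.det_le_trace_div_card_pow

theorem Matrix.sum_sq_one_sub_apply_le {ι : Type*} [Fintype ι] [DecidableEq ι]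
    {E : Matrix ι ι ℝ} {ε : ℝ} (i : ι) (hE : ∀ j, |E i j| ≤ ε) :
    ∑ j, (1 - E) i j ^ 2 ≤ 1 + 2 * ε + Fintype.card ι * ε ^ 2 := by
  have hentry : ∀ j, (1 - E) i j ^ 2 ≤ (if i = j then 1 + 2 * ε else 0) + ε ^ 2 := by
    intro j
    obtain ⟨hlo, hhi⟩ := abs_le.mp (hE j)
    by_cases hij : i = j
    · subst hij
      simp only [sub_apply, one_apply_eq, if_true]
      nlinarith
    · simp only [sub_apply, one_apply_ne hij, if_neg hij, zero_sub, neg_sq, zero_add]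
      nlinarith
  calc ∑ j, (1 - E) i j ^ 2 ≤ ∑ j, ((if i = j then 1 + 2 * ε else 0) + ε ^ 2) :=
        sum_le_sum fun j _ ↦ hentry j
    _ = 1 + 2 * ε + Fintype.card ι * ε ^ 2 := by
        simp [sum_add_distrib, sum_ite_eq]

theorem Real.le_rpow_half_of_sq_le_pow {a c : ℝ} (hc : 0 ≤ c) {n : ℕ} (h : a ^ 2 ≤ c ^ n) :
    a ≤ c ^ ((n : ℝ) / 2) := by
  have hsqrt : √(c ^ n) = c ^ ((n : ℝ) / 2) := by
    rw [Real.sqrt_eq_rpow, ← Real.rpow_natCast, ← Real.rpow_mul hc, mul_one_div]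
  exact hsqrt ▸ (le_abs_self a).trans (Real.abs_le_sqrt h)

theorem det_upper_bound_full_general
    (n : ℕ) (ε : ℝ) (hε : 0 ≤ ε)
    (E A : Matrix (Fin n) (Fin n) ℝ)
    (hA : A = 1 - E)
    (hE : ∀ i j, |E i j| ≤ ε) :
    A.det ≤ (1 + 2 * ε + (n : ℝ) * ε ^ 2) ^ ((n : ℝ) / 2) := by
  subst hA
  set c := 1 + 2 * ε + (n : ℝ) * ε ^ 2
  have hc : 0 ≤ c := by positivity
  have hrows : ∑ i, ∑ j, (1 - E) i j ^ 2 ≤ n * c := by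
    calc ∑ i, ∑ j, (1 - E) i j ^ 2 ≤ ∑ _i : Fin n, c := by
          simpa only [Fintype.card_fin] using
            sum_le_sum fun i (_ : i ∈ univ) ↦ sum_sq_one_sub_apply_le i (hE i)
      _ = n * c := by simp
  refine Real.le_rpow_half_of_sq_le_pow hc ?_
  calc (1 - E).det ^ 2 ≤ ((∑ i, ∑ j, (1 - E) i j ^ 2) / n) ^ n := by
        have := det_sq_le_sum_sq_div_card_pow (1 - E)
        rwa [Fintype.card_fin] at this
    _ ≤ c ^ n := by
        gcongr
        exact div_le_of_le_mul₀ n.cast_nonneg hc (by linarith)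

/-- If `A = I - E` with `|e i j| ≤ ε` for all `i, j`, where `ε ≥ 0`, then
`det A ≤ (1 + 2 ε + n ε²) ^ (n/2)` (real power). No upper restriction on `ε`. -/
theorem det_upper_bound_full
    (n : ℕ) (hn : 1 ≤ n) (ε : ℝ) (hε : 0 ≤ ε)
    (E A : Matrix (Fin n) (Fin n) ℝ)
    (hA : A = 1 - E)
    (hE : ∀ i j, |E i j| ≤ ε) :
    A.det ≤ (1 + 2 * ε + (n : ℝ) * ε ^ 2) ^ ((n : ℝ) / 2) :=
  det_upper_bound_full_general n ε hε E A hA hE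
end

section
/- If n ≥ 1 is an integer and ε is a real number with ε > 0 and nε < 1, then (1 + 2ε + nε²)^{n/2} < 1/(1 − nε). -/
/-!
Since `a ≤ exp (a - 1)`, the left side is at most `exp (t + t ^ 2 / 2)` with `t = n ε`, and
`t + t ^ 2 / 2` is a proper partial sum of the positive series `-log (1 - t) = ∑ tᵏ / k`.
-/

open Real Finset

lemma add_sq_div_two_lt_neg_log_one_sub {t : ℝ} (h₀ : 0 < t) (h₁ : t < 1) :
    t + t ^ 2 / 2 < -log (1 - t) := by
  have hseries := hasSum_pow_div_log_of_abs_lt_one (abs_lt.2 ⟨by linarith, h₁⟩)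
  have hpartial : ∑ i ∈ range 3, t ^ (i + 1) / (i + 1) ≤ -log (1 - t) :=
    sum_le_hasSum _ (fun i _ => by positivity) hseries
  norm_num [sum_range_succ] at hpartial
  linarith [pow_pos h₀ 3]

lemma rpow_le_exp_sub_one_mul {a y : ℝ} (ha : 0 < a) (hy : 0 ≤ y) :
    a ^ y ≤ exp ((a - 1) * y) := by
  rw [exp_mul]
  exact rpow_le_rpow ha.le (by linarith [add_one_le_exp (a - 1)]) hy

/-- If `n ≥ 1`, `ε > 0`, and `n ε < 1`, then
`(1 + 2 ε + n ε²) ^ (n/2) < 1 / (1 - n ε)` (real power). -/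
theorem upper_bound_lt_ostrowski
    (n : ℕ) (hn : 1 ≤ n) (ε : ℝ) (hε : 0 < ε) (hsize : (n : ℝ) * ε < 1) :
    (1 + 2 * ε + (n : ℝ) * ε ^ 2) ^ ((n : ℝ) / 2) < 1 / (1 - (n : ℝ) * ε) := by
  have hnε : 0 < (n : ℝ) * ε := mul_pos (Nat.cast_pos.2 hn) hε
  calc (1 + 2 * ε + (n : ℝ) * ε ^ 2) ^ ((n : ℝ) / 2)
      ≤ exp (n * ε + (n * ε) ^ 2 / 2) :=
        (rpow_le_exp_sub_one_mul (by positivity) (by positivity)).trans_eq (by ring_nf)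
    _ < exp (-log (1 - n * ε)) := exp_lt_exp.2 (add_sq_div_two_lt_neg_log_one_sub hnε hsize)
    _ = 1 / (1 - n * ε) := by rw [exp_neg, exp_log (by linarith), one_div]
end

section
/- Let U_n be the strictly upper triangular n×n matrix with u_{ij} = 1 if i < j and u_{ij} = 0 otherwise. Then for every real ε, det((1+ε)I_n + ε(U_n − U_nᵀ)) = ((1+2ε)^n + 1)/2. -/
/-!
The matrix is `a • 1 + b • S` with `a = 1 + ε`, `b = ε` and `S` the sign matrix (`1` above the
diagonal, `-1` below). Adding `t • J`, with `J` the all-ones matrix, changes the determinant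
affinely in `t`, because `J` has rank one. At `t = b` the matrix becomes upper triangular with
diagonal `a + b`, at `t = -b` lower triangular with diagonal `a - b`; averaging the two values
gives `2 det = (a + b) ^ n + (a - b) ^ n`.
-/

open Matrix

namespace Matrix

variable {R : Type*} [CommRing R]

theorem exists_det_add_smul_allOnes_fin {n : ℕ} (X : Matrix (Fin n) (Fin n) R) :
    ∃ s, ∀ t : R, (X + t • of fun _ _ => 1).det = X.det + t * s := by
  cases n with
  | zero => exact ⟨0, fun t => by simp⟩
  | succ n =>
    -- subtracting each column from the next one leaves `t` only in column `0`
    let C : Matrix (Fin (n + 1)) (Fin (n + 1)) R :=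
      of fun i j => Fin.cases (X i 0) (fun j => X i j.succ - X i j.castSucc) j
    have hC (t : R) :
        (X + t • of fun _ _ => 1).det = (updateCol C 0 ((fun i => C i 0) + t • 1)).det := by
      refine det_eq_of_forall_col_eq_smul_add_pred (fun _ => 1) (fun i => ?_) (fun i j => ?_)
      · simp [C]
      · simp [C, ← add_assoc]
    have hX : X.det = C.det := by simpa using hC 0
    refine ⟨(updateCol C 0 1).det, fun t => ?_⟩
    rw [hC, det_updateCol_add, det_updateCol_smul, updateCol_eq_self, hX]

theorem exists_det_add_smul_allOnes {m : Type*} [Fintype m] [DecidableEq m] (X : Matrix m m R) :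
    ∃ s, ∀ t : R, (X + t • of fun _ _ => 1).det = X.det + t * s := by
  let e := Fintype.equivFin m
  obtain ⟨s, hs⟩ := exists_det_add_smul_allOnes_fin (reindex e e X)
  refine ⟨s, fun t => ?_⟩
  rw [← det_reindex_self e, ← det_reindex_self e X, ← hs]
  rfl

variable {ι : Type*} [LinearOrder ι]

def diagAboveBelow (a b c : R) : Matrix ι ι R :=
  of fun i j => if i = j then a else if i < j then b else c

theorem diagAboveBelow_add_smul_allOnes (a b c t : R) :
    (diagAboveBelow a b c + t • of fun _ _ => 1 : Matrix ι ι R) =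
      diagAboveBelow (a + t) (b + t) (c + t) := by
  ext i j
  simp only [diagAboveBelow, add_apply, smul_apply, of_apply, smul_eq_mul, mul_one]
  split_ifs <;> rfl

variable [Fintype ι]

theorem det_diagAboveBelow_upperTriangular (a b : R) :
    (diagAboveBelow a b 0 : Matrix ι ι R).det = a ^ Fintype.card ι := by
  rw [det_of_isUpperTriangular]
  · simp [diagAboveBelow]
  · intro i j (hji : j < i)
    simp [diagAboveBelow, hji.ne', hji.not_gt]

theorem det_diagAboveBelow_lowerTriangular (a c : R) :
    (diagAboveBelow a 0 c : Matrix ι ι R).det = a ^ Fintype.card ι := by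
  rw [det_of_isLowerTriangular]
  · simp [diagAboveBelow]
  · intro i j (hij : i < j)
    simp [diagAboveBelow, hij.ne, hij]

theorem two_mul_det_diagAboveBelow_neg (a b : R) :
    2 * (diagAboveBelow a b (-b) : Matrix ι ι R).det =
      (a + b) ^ Fintype.card ι + (a - b) ^ Fintype.card ι := by
  obtain ⟨s, hs⟩ := exists_det_add_smul_allOnes (diagAboveBelow a b (-b) : Matrix ι ι R)
  have hplus := hs b
  have hminus := hs (-b)
  rw [diagAboveBelow_add_smul_allOnes, neg_add_cancel, det_diagAboveBelow_upperTriangular] at hplus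
  rw [diagAboveBelow_add_smul_allOnes, add_neg_cancel, ← sub_eq_add_neg,
    det_diagAboveBelow_lowerTriangular] at hminus
  rw [hplus, hminus]
  ring

end Matrix

/-- Let `U` be the strictly upper triangular `n × n` matrix of ones above the diagonal.
Then for every real `ε`, `det ((1+ε) I + ε (U - Uᵀ)) = ((1+2ε)^n + 1) / 2`. -/
theorem det_skew_triangular_shifted
    (n : ℕ) (ε : ℝ)
    (U : Matrix (Fin n) (Fin n) ℝ)
    (hU : U = Matrix.of fun i j => if i < j then (1 : ℝ) else 0) :
    ((1 + ε) • (1 : Matrix (Fin n) (Fin n) ℝ) + ε • (U - Uᵀ)).det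
      = ((1 + 2 * ε) ^ n + 1) / 2 := by
  have hA : (1 + ε) • (1 : Matrix (Fin n) (Fin n) ℝ) + ε • (U - Uᵀ) =
      diagAboveBelow (1 + ε) ε (-ε) := by
    ext i j
    rcases lt_trichotomy i j with h | rfl | h
    · simp [hU, diagAboveBelow, h, h.ne, h.not_gt]
    · simp [hU, diagAboveBelow]
    · simp [hU, diagAboveBelow, h, h.ne', h.not_gt]
  have key := two_mul_det_diagAboveBelow_neg (ι := Fin n) (1 + ε) ε
  rw [Fintype.card_fin, add_sub_cancel_right, one_pow, add_assoc, ← two_mul] at key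
  rw [hA]
  linarith
end

section
/- Let U_n be the strictly upper triangular n×n matrix with u_{ij} = 1 if i < j and u_{ij} = 0 otherwise. Then for every real ε, det(I_n + ε(U_n − U_nᵀ)) = ((1+ε)^n + (1−ε)^n)/2. -/
open Matrix

/-- The matrix with `1` on the diagonal, `ε` above and `-ε` below. -/
private def Mm (ε : ℝ) (n : ℕ) : Matrix (Fin n) (Fin n) ℝ :=
  Matrix.of fun i j => if i < j then ε else if j < i then -ε else 1

/-- `Mm` with the last diagonal entry replaced by `-ε` (so the last row is all `-ε`). -/
private def Gm (ε : ℝ) (n : ℕ) : Matrix (Fin (n + 1)) (Fin (n + 1)) ℝ :=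
  Matrix.of fun i j =>
    if i < j then ε else if j < i then -ε else if i = Fin.last n then -ε else 1

/-- Unit lower-triangular column-operation matrix: `col k ← col k - col (k+1)`. -/
private def Tm (n : ℕ) : Matrix (Fin (n + 1)) (Fin (n + 1)) ℝ :=
  Matrix.of fun j k => if j = k then 1 else if (j : ℕ) = (k : ℕ) + 1 then -1 else 0

/-- The result of the column operations applied to `Gm`. -/
private def Cm (ε : ℝ) (n : ℕ) : Matrix (Fin (n + 1)) (Fin (n + 1)) ℝ :=
  Matrix.of fun i k =>
    if i = Fin.last n then (if k = Fin.last n then -ε else 0)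
    else if k = Fin.last n then ε
    else if k = i then 1 - ε
    else if (k : ℕ) + 1 = (i : ℕ) then -(1 + ε) else 0

private lemma det_Tm (n : ℕ) : (Tm n).det = 1 := by
  rw [Matrix.det_of_lowerTriangular (Tm n) ?_]
  · simp [Tm]
  · intro i j hij
    have h : i < j := hij
    rw [Fin.lt_def] at h
    simp only [Tm, Matrix.of_apply, Fin.ext_iff]
    split_ifs <;> (first | rfl | (exfalso; omega))

private lemma Gm_mul_Tm (ε : ℝ) (n : ℕ) : Gm ε n * Tm n = Cm ε n := by
  ext i k
  rw [Matrix.mul_apply]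
  have hsplit : ∀ j : Fin (n + 1), Gm ε n i j * Tm n j k
      = (if j = k then Gm ε n i j else 0)
        + (if (j : ℕ) = (k : ℕ) + 1 then -(Gm ε n i j) else 0) := by
    intro j
    simp only [Tm, Matrix.of_apply, Fin.ext_iff]
    split_ifs <;> (first | ring1 | (exfalso; omega))
  rw [Finset.sum_congr rfl fun j _ => hsplit j, Finset.sum_add_distrib]
  rw [Finset.sum_ite_eq' Finset.univ k (fun j => Gm ε n i j)]
  simp only [Finset.mem_univ, if_true]
  by_cases hk : (k : ℕ) < n
  · have hkk : k ≠ Fin.last n := by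
      simp [Fin.ext_iff, Fin.last]; omega
    set k' : Fin (n + 1) := ⟨(k : ℕ) + 1, by omega⟩ with hk'
    have hcond : ∀ j : Fin (n + 1), ((j : ℕ) = (k : ℕ) + 1) ↔ j = k' := by
      intro j; simp [hk', Fin.ext_iff]
    rw [Finset.sum_congr rfl fun j _ => by rw [if_congr (hcond j) rfl rfl]]
    rw [Finset.sum_ite_eq' Finset.univ k' (fun j => -(Gm ε n i j))]
    simp only [Finset.mem_univ, if_true]
    simp only [Gm, Cm, Matrix.of_apply, Fin.lt_def, hk', Fin.ext_iff, Fin.val_last]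
    have hik : (i : ℕ) ≤ n := by omega
    split_ifs <;> (first | ring1 | (exfalso; omega))
  · have hkl : k = Fin.last n := by
      simp [Fin.ext_iff, Fin.last]; omega
    have hzero : ∀ j : Fin (n + 1), (if (j : ℕ) = (k : ℕ) + 1 then -(Gm ε n i j) else 0) = 0 := by
      intro j
      rw [if_neg]
      subst hkl
      simp only [Fin.val_last]
      omega
    rw [Finset.sum_congr rfl fun j _ => hzero j, Finset.sum_const_zero, add_zero]
    subst hkl
    simp only [Gm, Cm, Matrix.of_apply, Fin.lt_def, Fin.val_last, Fin.ext_iff]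
    split_ifs <;> (first | ring1 | (exfalso; omega))

private lemma det_Cm (ε : ℝ) (n : ℕ) : (Cm ε n).det = -ε * (1 - ε) ^ n := by
  rw [Matrix.det_succ_row (Cm ε n) (Fin.last n)]
  rw [Finset.sum_eq_single (Fin.last n)]
  · have hminor : ((Cm ε n).submatrix (Fin.last n).succAbove (Fin.last n).succAbove).det
        = (1 - ε) ^ n := by
      rw [Fin.succAbove_last]
      rw [Matrix.det_of_lowerTriangular _ ?_]
      · have key : ∀ i : Fin n, (Cm ε n) i.castSucc i.castSucc = 1 - ε := by
          intro i
          have hi := i.isLt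
          simp only [Cm, Matrix.of_apply, Fin.ext_iff, Fin.coe_castSucc, Fin.val_last]
          split_ifs <;> (first | rfl | (exfalso; omega))
        rw [Finset.prod_congr rfl fun i _ => by
          rw [Matrix.submatrix_apply, key i]]
        simp
      · intro i j hij
        have hlt : i < j := hij
        rw [Fin.lt_def] at hlt
        have hi := i.isLt
        have hj := j.isLt
        simp only [Cm, Matrix.submatrix_apply, Matrix.of_apply, Fin.ext_iff,
          Fin.coe_castSucc, Fin.val_last]
        split_ifs <;> (first | rfl | (exfalso; omega))
    rw [hminor]
    have hdiag : (Cm ε n) (Fin.last n) (Fin.last n) = -ε := by simp [Cm]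
    rw [hdiag]
    have : ((-1 : ℝ)) ^ ((Fin.last n : ℕ) + (Fin.last n : ℕ)) = 1 :=
      Even.neg_one_pow ⟨(Fin.last n : ℕ), rfl⟩
    rw [this]
    ring
  · intro j _ hj
    have : (Cm ε n) (Fin.last n) j = 0 := by simp [Cm, hj]
    rw [this]
    ring
  · simp

private lemma det_Gm (ε : ℝ) (n : ℕ) : (Gm ε n).det = -ε * (1 - ε) ^ n := by
  have := congrArg Matrix.det (Gm_mul_Tm ε n)
  rwa [Matrix.det_mul, det_Tm, mul_one, det_Cm] at this

private lemma Mm_castSucc (ε : ℝ) (n : ℕ) :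
    (Mm ε (n + 1)).submatrix Fin.castSucc Fin.castSucc = Mm ε n := by
  ext i j
  simp only [Matrix.submatrix_apply, Mm, Matrix.of_apply, Fin.castSucc_lt_castSucc_iff]

private lemma det_Mm_succ (ε : ℝ) (n : ℕ) :
    (Mm ε (n + 1)).det = (1 + ε) * (Mm ε n).det + (Gm ε n).det := by
  set M := Mm ε (n + 1) with hM
  set r := Fin.last n with hr
  have hrow : M.updateRow r
      ((fun j => if j = r then (1 + ε : ℝ) else 0) + fun _ => -ε) = M := by
    ext i j
    rw [Matrix.updateRow_apply]
    split_ifs with hi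
    · subst hi
      have hjlt := j.isLt
      simp only [Pi.add_apply, hM, Mm, Matrix.of_apply, hr, Fin.ext_iff, Fin.lt_def,
        Fin.val_last]
      split_ifs <;> (first | ring1 | (exfalso; omega))
    · rfl
  rw [← hrow, Matrix.det_updateRow_add]
  congr 1
  · have hsmul : (fun j => if j = r then (1 + ε : ℝ) else 0)
        = (1 + ε) • fun j => if j = r then (1 : ℝ) else 0 := by
      funext j; simp only [Pi.smul_apply, smul_eq_mul]; split_ifs <;> ring
    rw [hsmul, Matrix.det_updateRow_smul]
    congr 1
    set A := M.updateRow r fun j => if j = r then (1 : ℝ) else 0 with hA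
    rw [Matrix.det_succ_row A r]
    rw [Finset.sum_eq_single r]
    · have h1 : A r r = 1 := by simp [hA]
      have h2 : A.submatrix r.succAbove r.succAbove = Mm ε n := by
        rw [hr, Fin.succAbove_last, ← Mm_castSucc ε n]
        ext i j
        simp only [Matrix.submatrix_apply]
        rw [hA, Matrix.updateRow_ne (Fin.castSucc_lt_last i).ne]
      rw [h1, h2]
      have hpow : ((-1 : ℝ)) ^ ((r : ℕ) + (r : ℕ)) = 1 :=
        Even.neg_one_pow ⟨(r : ℕ), by ring⟩
      rw [hpow]; ring
    · intro j _ hj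
      have : A r j = 0 := by simp [hA, hj]
      rw [this]; ring
    · simp
  · congr 1
    ext i j
    rw [Matrix.updateRow_apply]
    have hi := i.isLt
    have hj := j.isLt
    simp only [hM, Mm, Gm, Matrix.of_apply, hr, Fin.ext_iff, Fin.lt_def, Fin.val_last]
    split_ifs <;> (first | ring1 | (exfalso; omega))

private lemma det_Mm (ε : ℝ) : ∀ n : ℕ,
    (Mm ε n).det = ((1 + ε) ^ n + (1 - ε) ^ n) / 2 := by
  intro n
  induction n with
  | zero => simp [Matrix.det_isEmpty]
  | succ n ih =>
    rw [det_Mm_succ, ih, det_Gm]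
    ring

/-- Let `U` be the strictly upper triangular `n × n` matrix of ones above the diagonal.
Then for every real `ε`, `det (I + ε (U - Uᵀ)) = ((1+ε)^n + (1-ε)^n) / 2`. -/
theorem det_skew_triangular
    (n : ℕ) (ε : ℝ)
    (U : Matrix (Fin n) (Fin n) ℝ)
    (hU : U = Matrix.of fun i j => if i < j then (1 : ℝ) else 0) :
    ((1 : Matrix (Fin n) (Fin n) ℝ) + ε • (U - Uᵀ)).det
      = ((1 + ε) ^ n + (1 - ε) ^ n) / 2 := by
  have hMat : (1 : Matrix (Fin n) (Fin n) ℝ) + ε • (U - Uᵀ) = Mm ε n := by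
    ext i j
    simp only [Matrix.add_apply, Matrix.one_apply, Matrix.smul_apply, Matrix.sub_apply,
      Matrix.transpose_apply, hU, Matrix.of_apply, Mm, smul_eq_mul]
    rcases lt_trichotomy i j with h | h | h
    · rw [if_neg h.ne, if_pos h, if_neg (lt_asymm h), if_pos h]; ring
    · subst h; simp
    · rw [if_neg h.ne', if_neg (lt_asymm h), if_pos h, if_neg (lt_asymm h), if_pos h]; ring
  rw [hMat, det_Mm]
end

section
/- Let H be an n×n real matrix with |h_{ij}| ≤ 1 for all 1 ≤ i,j ≤ n, and suppose there exists ε₀ > 0 such that det((1−ε)I + εH) = (1 + (n−1)ε²)^{n/2} for all ε ∈ (0, ε₀). Then H is a skew-Hadamard matrix, i.e. every entry of H is ±1, HᵀH = nI, and H + Hᵀ = 2I. -/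
/-!
Write `H = 1 + A`. Squaring the hypothesis and comparing polynomials gives
`det (1 + x A)² = (1 + (n - 1) x²)ⁿ` for every real `x`. Both `det (1 + x A)` and `det (1 - x A)`
are polynomial square roots of the right-hand side taking the value `1` at `0`, so they agree.
Hence `tr A = 0`, and `det (t - A²) = t ⁿ det (1 - s A) det (1 + s A) = (t + n - 1)ⁿ` for
`s = t^(-1/2)`, so `tr A² = -n (n - 1)` and `A² + (n - 1)` is nilpotent.
As `|hᵢⱼ| ≤ 1` gives `tr AᵀA ≤ n (n - 1)`, the nonnegative number
`tr ((A + Aᵀ)ᵀ (A + Aᵀ)) = 2 (tr AᵀA + tr A²)` vanishes and `A` is skew. Then `A² + (n - 1)` is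
symmetric and nilpotent, hence zero, so `HᵀH = (1 - A)(1 + A) = n`; columns of squared norm `n`
with entries in `[-1, 1]` have all entries `±1`.
-/

open Matrix Polynomial

namespace Matrix

variable {m : Type*} [Fintype m]

theorem transpose_eq_neg_of_trace_add_trace_nonpos {A : Matrix m m ℝ}
    (h : trace (Aᵀ * A) + trace (A * A) ≤ 0) : Aᵀ = -A := by
  set B := A + Aᵀ
  have hB : trace (Bᵀ * B) = 2 * (trace (Aᵀ * A) + trace (A * A)) := by
    simp only [B, transpose_add, transpose_transpose, add_mul, mul_add, trace_add]
    rw [trace_mul_comm A Aᵀ, ← transpose_mul, trace_transpose]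
    ring
  have hB0 : B = 0 := by
    rw [← trace_conjTranspose_mul_self_eq_zero_iff, conjTranspose_eq_transpose_of_trivial]
    refine le_antisymm (by linarith) ?_
    simpa only [conjTranspose_eq_transpose_of_trivial] using
      (posSemidef_conjTranspose_mul_self B).trace_nonneg
  exact eq_neg_of_add_eq_zero_right hB0

theorem trace_transpose_mul_self_le_card_sq {H : Matrix m m ℝ} (hH : ∀ i j, |H i j| ≤ 1) :
    trace (Hᵀ * H) ≤ Fintype.card m ^ 2 :=
  calc trace (Hᵀ * H) = ∑ i, ∑ j, H j i ^ 2 := by simp [trace, mul_apply, sq]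
    _ ≤ ∑ i : m, ∑ j : m, (1 : ℝ) := by
      gcongr with i _ j _
      exact (sq_le_one_iff_abs_le_one _).mpr (hH j i)
    _ = Fintype.card m ^ 2 := by simp [sq]

variable [DecidableEq m]

theorem eval_det_one_add_X_smul {R : Type*} [CommRing R] (A : Matrix m m R) (x : R) :
    (det (1 + (X : R[X]) • A.map C)).eval x = det (1 + x • A) := by
  simp [eval_det, ← smul_eq_mul_diagonal]

theorem one_sub_smul_mul_one_add_smul {R : Type*} [CommRing R] (A : Matrix m m R) (x : R) :
    (1 - x • A) * (1 + x • A) = 1 - x ^ 2 • (A * A) := by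
  rw [sub_mul, one_mul, mul_add, mul_one, smul_mul_smul_comm, sq]
  abel

theorem sq_det_one_add_smul_eq_of_infinite {R : Type*} [CommRing R] [IsDomain R]
    {A : Matrix m m R} {c : R} {k : ℕ} {S : Set R} (hS : S.Infinite)
    (h : ∀ x ∈ S, det (1 + x • A) ^ 2 = (1 + c * x ^ 2) ^ k) (x : R) :
    det (1 + x • A) ^ 2 = (1 + c * x ^ 2) ^ k := by
  have := eq_of_infinite_eval_eq (det (1 + (X : R[X]) • A.map C) ^ 2) ((1 + C c * X ^ 2) ^ k)
    (hS.mono fun y hy => by simpa [eval_det_one_add_X_smul] using h y hy)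
  simpa [eval_det_one_add_X_smul] using congrArg (eval x) this

section Hermitian

variable {R : Type*} [CommRing R] [PartialOrder R] [StarRing R] [StarOrderedRing R]
  [NoZeroDivisors R] {M : Matrix m m R}

theorem IsHermitian.eq_zero_of_sq_eq_zero (hM : M.IsHermitian) (h : M ^ 2 = 0) : M = 0 :=
  trace_conjTranspose_mul_self_eq_zero_iff.mp (by rw [hM.eq, ← sq, h, trace_zero])

theorem IsHermitian.eq_zero_of_isNilpotent (hM : M.IsHermitian) (h : IsNilpotent M) : M = 0 := by
  obtain ⟨k, hk⟩ := h
  suffices ∀ j : ℕ, ∀ N : Matrix m m R, N.IsHermitian → N ^ 2 ^ j = 0 → N = 0 from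
    this k M hM (pow_eq_zero_of_le Nat.lt_two_pow_self.le hk)
  intro j
  induction j with
  | zero => simp
  | succ j ih =>
    intro N hN hNj
    refine hN.eq_zero_of_sq_eq_zero (ih _ (hN.pow 2) ?_)
    rwa [← pow_mul, ← pow_succ']

end Hermitian

section SqDet

variable {A : Matrix m m ℝ} {c : ℝ}

theorem det_one_add_X_smul_neg_of_sq_det
    (hA : ∀ x : ℝ, det (1 + x • A) ^ 2 = (1 + c * x ^ 2) ^ Fintype.card m) :
    det (1 + (X : ℝ[X]) • (-A).map C) = det (1 + (X : ℝ[X]) • A.map C) := by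
  set D := det (1 + (X : ℝ[X]) • A.map C)
  set D' := det (1 + (X : ℝ[X]) • (-A).map C)
  have hsq : (D' - D) * (D' + D) = 0 := by
    refine Polynomial.funext fun x => ?_
    simp only [eval_mul, eval_sub, eval_add, eval_zero, D, D', eval_det_one_add_X_smul, smul_neg,
      ← neg_smul]
    linear_combination hA (-x) - hA x
  have h0 : (D' + D).eval 0 ≠ 0 := by
    simp [D, D', eval_det_one_add_X_smul]
  exact sub_eq_zero.mp ((mul_eq_zero.mp hsq).resolve_right fun h => h0 (by rw [h, eval_zero]))

theorem trace_eq_zero_of_sq_det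
    (hA : ∀ x : ℝ, det (1 + x • A) ^ 2 = (1 + c * x ^ 2) ^ Fintype.card m) : trace A = 0 := by
  have := congrArg (coeff · 1) (det_one_add_X_smul_neg_of_sq_det hA)
  simp only [coeff_det_one_add_X_smul_one, trace_neg] at this
  linarith

theorem charpoly_mul_self_of_sq_det
    (hA : ∀ x : ℝ, det (1 + x • A) ^ 2 = (1 + c * x ^ 2) ^ Fintype.card m) :
    (A * A).charpoly = (X + C c) ^ Fintype.card m := by
  refine eq_of_infinite_eval_eq _ _ ((Set.Ioi_infinite 0).mono fun t (ht : 0 < t) => ?_)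
  set s := (√t)⁻¹
  have hts : t * s ^ 2 = 1 := by simp [s, inv_pow, Real.sq_sqrt ht.le, ht.ne']
  have heven : det (1 - s • A) = det (1 + s • A) := by
    simpa [eval_det_one_add_X_smul, ← sub_eq_add_neg] using
      congrArg (eval s) (det_one_add_X_smul_neg_of_sq_det hA)
  have hfac : scalar m t - A * A = t • ((1 - s • A) * (1 + s • A)) := by
    rw [one_sub_smul_mul_one_add_smul, smul_sub, smul_smul, hts, one_smul, smul_one_eq_diagonal]
    rfl
  change eval t _ = eval t _
  rw [eval_charpoly, hfac, det_smul, det_mul, heven, ← sq, hA, ← mul_pow, mul_add, mul_one,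
    mul_left_comm, hts, mul_one]
  simp

theorem trace_mul_self_of_sq_det
    (hA : ∀ x : ℝ, det (1 + x • A) ^ 2 = (1 + c * x ^ 2) ^ Fintype.card m) :
    trace (A * A) = -(Fintype.card m * c) := by
  rw [trace_eq_neg_charpoly_nextCoeff, charpoly_mul_self_of_sq_det hA,
    (monic_X_add_C c).nextCoeff_pow, nextCoeff_X_add_C, nsmul_eq_mul]

theorem mul_self_of_sq_det
    (hA : ∀ x : ℝ, det (1 + x • A) ^ 2 = (1 + c * x ^ 2) ^ Fintype.card m) (hskew : Aᵀ = -A) :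
    A * A = -(c • 1) := by
  have hherm : (A * A + c • 1).IsHermitian := by
    rw [IsHermitian, conjTranspose_eq_transpose_of_trivial, transpose_add, transpose_mul, hskew,
      neg_mul_neg, transpose_smul, transpose_one]
  have hnil : IsNilpotent (A * A + c • 1) := by
    refine ⟨Fintype.card m, ?_⟩
    have := aeval_self_charpoly (A * A)
    rwa [charpoly_mul_self_of_sq_det hA, map_pow, map_add, aeval_X, aeval_C,
      Algebra.algebraMap_eq_smul_one] at this
  exact eq_neg_of_add_eq_zero_left (hherm.eq_zero_of_isNilpotent hnil)

end SqDet

section AbsLeOne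

variable {H : Matrix m m ℝ}

theorem transpose_sub_one_eq_neg_of_sq_det (hH : ∀ i j, |H i j| ≤ 1)
    (hA : ∀ x : ℝ, det (1 + x • (H - 1)) ^ 2 =
      (1 + (Fintype.card m - 1) * x ^ 2) ^ Fintype.card m) :
    (H - 1)ᵀ = -(H - 1) := by
  apply transpose_eq_neg_of_trace_add_trace_nonpos
  have htr := trace_eq_zero_of_sq_det hA
  have htr2 := trace_mul_self_of_sq_det hA
  have hle := trace_transpose_mul_self_le_card_sq hH
  have : trace ((H - 1)ᵀ * (H - 1)) = trace (Hᵀ * H) - 2 * trace (H - 1) - Fintype.card m := by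
    simp only [transpose_sub, transpose_one, sub_mul, mul_sub, one_mul, mul_one, trace_sub,
      trace_transpose, trace_one]
    ring
  nlinarith

theorem eq_one_or_eq_neg_one_of_transpose_mul_self_eq (hH : ∀ i j, |H i j| ≤ 1)
    (hHH : Hᵀ * H = (Fintype.card m : ℝ) • 1) (i j : m) : H i j = 1 ∨ H i j = -1 := by
  have hcol : ∑ k, H k j ^ 2 = ∑ k : m, (1 : ℝ) := by
    simpa [mul_apply, sq] using congrFun (congrFun hHH j) j
  have hij := (Finset.sum_eq_sum_iff_of_le fun k _ => (sq_le_one_iff_abs_le_one _).mpr (hH k j)).mp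
    hcol i (Finset.mem_univ i)
  exact mul_self_eq_one_iff.mp (by rwa [← sq])

end AbsLeOne

end Matrix

/-- If `H` is an `n × n` real matrix with `|h i j| ≤ 1` and there is an `ε₀ > 0` such
that `det ((1-ε) I + ε H) = (1 + (n-1) ε²) ^ (n/2)` (real power) for all
`ε ∈ (0, ε₀)`, then `H` is a skew-Hadamard matrix: all entries of `H` are `±1`,
`Hᵀ H = n I`, and `H + Hᵀ = 2 I`. -/
theorem skew_hadamard_of_det_eq
    (n : ℕ) (H : Matrix (Fin n) (Fin n) ℝ)
    (hH : ∀ i j, |H i j| ≤ 1)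
    (ε₀ : ℝ) (hε₀ : 0 < ε₀)
    (hdet : ∀ ε : ℝ, 0 < ε → ε < ε₀ →
      ((1 - ε) • (1 : Matrix (Fin n) (Fin n) ℝ) + ε • H).det
        = (1 + ((n : ℝ) - 1) * ε ^ 2) ^ ((n : ℝ) / 2)) :
    (∀ i j, H i j = 1 ∨ H i j = -1)
      ∧ Hᵀ * H = (n : ℝ) • (1 : Matrix (Fin n) (Fin n) ℝ)
      ∧ H + Hᵀ = (2 : ℝ) • (1 : Matrix (Fin n) (Fin n) ℝ) := by
  obtain rfl | hn := n.eq_zero_or_pos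
  · exact ⟨fun i => i.elim0, Subsingleton.elim _ _, Subsingleton.elim _ _⟩
  have hsq : ∀ ε ∈ Set.Ioo 0 ε₀, det (1 + ε • (H - 1)) ^ 2 =
      (1 + (Fintype.card (Fin n) - 1) * ε ^ 2) ^ Fintype.card (Fin n) := by
    rintro ε ⟨hε, hε'⟩
    have hbase : 0 ≤ 1 + ((n : ℝ) - 1) * ε ^ 2 := by
      have : (1 : ℝ) ≤ n := by exact_mod_cast hn
      nlinarith [sq_nonneg ε]
    rw [Fintype.card_fin, show 1 + ε • (H - 1) = (1 - ε) • 1 + ε • H by module, hdet ε hε hε',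
      ← Real.rpow_mul_natCast hbase, Nat.cast_ofNat, div_mul_cancel₀ _ two_ne_zero,
      Real.rpow_natCast]
  have hA := sq_det_one_add_smul_eq_of_infinite (Set.Ioo_infinite hε₀) hsq
  have hskew := transpose_sub_one_eq_neg_of_sq_det hH hA
  have hHt : Hᵀ = 1 - (H - 1) :=
    calc Hᵀ = (H - 1)ᵀ + 1 := by simp
      _ = 1 - (H - 1) := by rw [hskew]; abel
  have hHH : Hᵀ * H = (n : ℝ) • 1 :=
    calc Hᵀ * H = 1 - (H - 1) * (H - 1) := by rw [hHt]; noncomm_ring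
      _ = (n : ℝ) • 1 := by
        rw [mul_self_of_sq_det hA hskew, Fintype.card_fin]
        module
  refine ⟨eq_one_or_eq_neg_one_of_transpose_mul_self_eq hH (by rwa [Fintype.card_fin]), hHH, ?_⟩
  rw [hHt, two_smul]
  abel
end

section
/- If H is a skew-Hadamard matrix of order n (entries ±1, HᵀH = nI, H + Hᵀ = 2I), then for every real ε, det((1−ε)I + εH) = (1 + (n−1)ε²)^{n/2}. -/
open Matrix

private lemma key_mul (n : ℕ) (H : Matrix (Fin n) (Fin n) ℝ)
    (hHad : Hᵀ * H = (n : ℝ) • (1 : Matrix (Fin n) (Fin n) ℝ))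
    (hskew : H + Hᵀ = (2 : ℝ) • (1 : Matrix (Fin n) (Fin n) ℝ)) (t : ℝ) :
    ((1 - t) • (1 : Matrix (Fin n) (Fin n) ℝ) + t • H)ᵀ *
      ((1 - t) • (1 : Matrix (Fin n) (Fin n) ℝ) + t • H)
      = (1 + ((n : ℝ) - 1) * t ^ 2) • (1 : Matrix (Fin n) (Fin n) ℝ) := by
  have h1 : ((1 - t) • (1 : Matrix (Fin n) (Fin n) ℝ) + t • H)ᵀ
      = (1 - t) • (1 : Matrix (Fin n) (Fin n) ℝ) + t • Hᵀ := by
    simp [transpose_add, transpose_smul]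
  rw [h1]
  rw [add_mul, mul_add, mul_add]
  rw [smul_mul_smul_comm, smul_mul_smul_comm, smul_mul_smul_comm, smul_mul_smul_comm]
  rw [one_mul, mul_one, one_mul, hHad]
  have h2 : ((1 - t) * t) • H + (((t * (1 - t)) • Hᵀ) + (t * t) • ((n : ℝ) • 1))
      = ((1 - t) * t) • (H + Hᵀ) + ((t * t) * (n : ℝ)) • (1 : Matrix (Fin n) (Fin n) ℝ) := by
    rw [smul_add, smul_smul]
    ring_nf
    abel
  rw [add_assoc, h2, hskew, smul_smul]
  rw [← add_smul, ← add_smul]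
  congr 1
  ring

/-- If `H` is a skew-Hadamard matrix of order `n` (entries `±1`, `Hᵀ H = n I`,
`H + Hᵀ = 2 I`), then for every real `ε`,
`det ((1-ε) I + ε H) = (1 + (n-1) ε²) ^ (n/2)` (real power). -/
theorem det_eq_of_skew_hadamard
    (n : ℕ) (H : Matrix (Fin n) (Fin n) ℝ)
    (hentries : ∀ i j, H i j = 1 ∨ H i j = -1)
    (hHad : Hᵀ * H = (n : ℝ) • (1 : Matrix (Fin n) (Fin n) ℝ))
    (hskew : H + Hᵀ = (2 : ℝ) • (1 : Matrix (Fin n) (Fin n) ℝ))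
    (ε : ℝ) :
    ((1 - ε) • (1 : Matrix (Fin n) (Fin n) ℝ) + ε • H).det
      = (1 + ((n : ℝ) - 1) * ε ^ 2) ^ ((n : ℝ) / 2) := by
  rcases Nat.eq_zero_or_pos n with hn | hn
  · subst hn
    simp [Matrix.det_fin_zero]
  set f : ℝ → ℝ := fun t => ((1 - t) • (1 : Matrix (Fin n) (Fin n) ℝ) + t • H).det with hf
  have hcont : Continuous f := by
    apply Continuous.matrix_det
    apply Continuous.add
    · exact (continuous_const.sub continuous_id).smul continuous_const
    · exact continuous_id.smul continuous_const
  have hc : ∀ t : ℝ, (0 : ℝ) < 1 + ((n : ℝ) - 1) * t ^ 2 := by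
    intro t
    have h1 : (1 : ℝ) ≤ (n : ℝ) := by exact_mod_cast hn
    nlinarith [sq_nonneg t]
  have hsq : ∀ t : ℝ, f t ^ 2 = (1 + ((n : ℝ) - 1) * t ^ 2) ^ n := by
    intro t
    have := congrArg Matrix.det (key_mul n H hHad hskew t)
    rw [det_mul, det_transpose, det_smul, det_one, mul_one] at this
    rw [hf]; simp only
    rw [sq]; rw [this]; simp
  have hne : ∀ t : ℝ, f t ≠ 0 := by
    intro t ht
    have := hsq t
    rw [ht] at this
    have := pow_pos (hc t) n
    simp_all
  have hpos : 0 < f ε := by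
    by_contra h
    push_neg at h
    have hlt : f ε < 0 := lt_of_le_of_ne h (hne ε)
    have h0 : f 0 = 1 := by simp [hf]
    have : (0 : ℝ) ∈ Set.uIcc (f 0) (f ε) := by
      rw [Set.mem_uIcc]; right; exact ⟨hlt.le, by rw [h0]; norm_num⟩
    obtain ⟨t, _, ht⟩ := intermediate_value_uIcc (hcont.continuousOn (s := Set.uIcc 0 ε)) this
    exact hne t ht
  have hceps := hc ε
  have : f ε = Real.sqrt ((1 + ((n : ℝ) - 1) * ε ^ 2) ^ n) := by
    rw [← hsq ε, Real.sqrt_sq hpos.le]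
  rw [show ((1 - ε) • (1 : Matrix (Fin n) (Fin n) ℝ) + ε • H).det = f ε from rfl, this]
  rw [Real.sqrt_eq_rpow, ← Real.rpow_natCast (1 + ((n : ℝ) - 1) * ε ^ 2) n,
    ← Real.rpow_mul hceps.le]
  ring_nf
end

section
/- If n ≥ 3 is an integer and ε is a real number with 0 ≤ (n−1)ε ≤ 1, then (1 − (n−1)ε)(1 + ε)^{n−1} ≥ (1 − (n−1)²ε²)^{⌊n/2⌋}, with strict inequality when 0 < (n−1)ε < 1. That is, the lower bound (1 − (n−1)ε)(1+ε)^{n−1} is stronger than Ostrowski's improved lower bound (1 − (n−1)²ε²)^{⌊n/2⌋} for n > 2. -/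
lemma strict_bernoulli (ε : ℝ) (hε : 0 < ε) :
    ∀ m : ℕ, 2 ≤ m → 1 + (m : ℝ) * ε < (1 + ε) ^ m := by
  intro m hm
  induction m with
  | zero => omega
  | succ k ih =>
    rcases Nat.lt_or_ge k 2 with hk | hk
    · interval_cases k
      · omega
      · push_cast; nlinarith
    · have hih := ih hk
      have hpos : (0:ℝ) < 1 + ε := by linarith
      have h1 : (1 + ε) ^ (k + 1) = (1 + ε) ^ k * (1 + ε) := by ring
      rw [h1]
      push_cast
      have h2 : (1 + (k:ℝ) * ε) * (1 + ε) < (1 + ε) ^ k * (1 + ε) :=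
        mul_lt_mul_of_pos_right hih hpos
      have h3 : 1 + ((k:ℝ) + 1) * ε ≤ (1 + (k:ℝ) * ε) * (1 + ε) := by
        have hk0 : (0:ℝ) ≤ (k:ℝ) := Nat.cast_nonneg k
        nlinarith [sq_nonneg ε]
      linarith

/-- For integers `n ≥ 3` and real `ε` with `0 ≤ (n-1) ε ≤ 1`,
`(1 - (n-1) ε) (1 + ε)^(n-1) ≥ (1 - (n-1)² ε²) ^ ⌊n/2⌋`, with strict inequality
when `0 < (n-1) ε < 1`. -/
theorem lower_bound_stronger_than_ostrowski
    (n : ℕ) (hn : 3 ≤ n) (ε : ℝ)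
    (h0 : 0 ≤ ((n : ℝ) - 1) * ε) (h1 : ((n : ℝ) - 1) * ε ≤ 1) :
    (1 - ((n : ℝ) - 1) ^ 2 * ε ^ 2) ^ (n / 2)
        ≤ (1 - ((n : ℝ) - 1) * ε) * (1 + ε) ^ (n - 1)
      ∧ (0 < ((n : ℝ) - 1) * ε → ((n : ℝ) - 1) * ε < 1 →
        (1 - ((n : ℝ) - 1) ^ 2 * ε ^ 2) ^ (n / 2)
          < (1 - ((n : ℝ) - 1) * ε) * (1 + ε) ^ (n - 1)) := by
  have hn3 : (3:ℝ) ≤ (n:ℝ) := by exact_mod_cast hn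
  have hmpos : (0:ℝ) < (n:ℝ) - 1 := by linarith
  have hε0 : 0 ≤ ε := by
    by_contra h
    push_neg at h
    nlinarith
  -- base c in [0,1]
  have hc0 : 0 ≤ 1 - ((n : ℝ) - 1) ^ 2 * ε ^ 2 := by nlinarith
  have hc1 : 1 - ((n : ℝ) - 1) ^ 2 * ε ^ 2 ≤ 1 := by nlinarith
  have hk1 : 1 ≤ n / 2 := by omega
  have hstep : (1 - ((n : ℝ) - 1) ^ 2 * ε ^ 2) ^ (n / 2)
      ≤ 1 - ((n : ℝ) - 1) ^ 2 * ε ^ 2 := by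
    simpa using pow_le_pow_of_le_one hc0 hc1 hk1
  -- cast: (n:ℝ) - 1 = ((n-1 : ℕ) : ℝ)
  have hcast : ((n - 1 : ℕ) : ℝ) = (n : ℝ) - 1 := by
    have : 1 ≤ n := by omega
    push_cast [this]; ring
  have hbern : 1 + ((n : ℝ) - 1) * ε ≤ (1 + ε) ^ (n - 1) := by
    have := one_add_mul_le_pow (a := ε) (by linarith) (n - 1)
    rwa [hcast] at this
  have h1ε0 : 0 ≤ 1 - ((n : ℝ) - 1) * ε := by linarith
  have hfact : 1 - ((n : ℝ) - 1) ^ 2 * ε ^ 2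
      = (1 - ((n : ℝ) - 1) * ε) * (1 + ((n : ℝ) - 1) * ε) := by ring
  constructor
  · calc (1 - ((n : ℝ) - 1) ^ 2 * ε ^ 2) ^ (n / 2)
        ≤ 1 - ((n : ℝ) - 1) ^ 2 * ε ^ 2 := hstep
      _ = (1 - ((n : ℝ) - 1) * ε) * (1 + ((n : ℝ) - 1) * ε) := hfact
      _ ≤ (1 - ((n : ℝ) - 1) * ε) * (1 + ε) ^ (n - 1) :=
        mul_le_mul_of_nonneg_left hbern h1ε0
  · intro hp hl
    have hεpos : 0 < ε := by
      rcases hε0.lt_or_eq with h | h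
      · exact h
      · exfalso; rw [← h] at hp; simp at hp
    have hm2 : 2 ≤ n - 1 := by omega
    have hsb := strict_bernoulli ε hεpos (n - 1) hm2
    rw [hcast] at hsb
    have h1εpos : 0 < 1 - ((n : ℝ) - 1) * ε := by linarith
    calc (1 - ((n : ℝ) - 1) ^ 2 * ε ^ 2) ^ (n / 2)
        ≤ 1 - ((n : ℝ) - 1) ^ 2 * ε ^ 2 := hstep
      _ = (1 - ((n : ℝ) - 1) * ε) * (1 + ((n : ℝ) - 1) * ε) := hfact
      _ < (1 - ((n : ℝ) - 1) * ε) * (1 + ε) ^ (n - 1) :=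
        (mul_lt_mul_iff_right₀ h1εpos).mpr hsb
end

section
/- If n ≥ 3 is an integer and ε is a real number with 0 < ε and (n−1)ε ≤ 1, then (1 + (n−1)ε²)^{n/2} < (1 + (n−1)²ε²)^{⌊n/2⌋}. That is, the upper bound (1 + (n−1)ε²)^{n/2} is stronger than Ostrowski's upper bound (1 + (n−1)²ε²)^{⌊n/2⌋} for n > 2 under the hypothesis (n−1)ε ≤ 1. -/
/-- For integers `n ≥ 3` and real `ε` with `0 < ε` and `(n-1) ε ≤ 1`,
`(1 + (n-1) ε²) ^ (n/2) < (1 + (n-1)² ε²) ^ ⌊n/2⌋`, where the left-hand exponent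
`n/2` is a real power and `⌊n/2⌋` is the integer floor. -/
theorem upper_bound_stronger_than_ostrowski
    (n : ℕ) (hn : 3 ≤ n) (ε : ℝ) (hε : 0 < ε)
    (h1 : ((n : ℝ) - 1) * ε ≤ 1) :
    (1 + ((n : ℝ) - 1) * ε ^ 2) ^ ((n : ℝ) / 2)
      < (1 + ((n : ℝ) - 1) ^ 2 * ε ^ 2) ^ (n / 2) := by
  have hε2 : 0 < ε ^ 2 := pow_pos hε 2
  rcases eq_or_lt_of_le hn with h3 | h4
  · -- n = 3
    subst h3
    norm_num at h1 ⊢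
    have hx : (0:ℝ) ≤ 1 + 2 * ε ^ 2 := by nlinarith
    have h32 : ((3:ℝ)/2) = ((3:ℕ):ℝ) * (1/2) := by norm_num
    rw [h32, Real.rpow_mul hx, Real.rpow_natCast, ← Real.sqrt_eq_rpow]
    rw [Real.sqrt_lt' (by nlinarith)]
    have hε3 : ε ≤ 1/2 := by linarith
    have h4' : ε^2 ≤ 1/4 := by nlinarith
    have h6 : ε^4*ε^2 ≤ ε^4*(1/4) :=
      mul_le_mul_of_nonneg_left h4' (by positivity)
    nlinarith [pow_pos hε 4, h6]
  · -- n ≥ 4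
    have hn4 : 4 ≤ n := h4
    set c : ℝ := (n:ℝ) - 1 with hc
    have hc3 : (3:ℝ) ≤ c := by
      have : (4:ℝ) ≤ (n:ℝ) := by exact_mod_cast hn4
      simp [hc]; linarith
    have ha1 : (1:ℝ) ≤ 1 + c * ε ^ 2 := by nlinarith
    have hb1 : (1:ℝ) ≤ 1 + c ^ 2 * ε ^ 2 := by nlinarith
    have hab : 1 + c * ε ^ 2 ≤ 1 + c ^ 2 * ε ^ 2 := by nlinarith
    have hεle : ε ≤ 1/3 := by nlinarith
    have hc0 : (0:ℝ) < c := by linarith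
    have h9 : ε^2 ≤ 1/9 := by nlinarith
    have h9' : c^2*ε^4 ≤ c^2*ε^2*(1/9) := by nlinarith [mul_le_mul_of_nonneg_left h9 (mul_nonneg (sq_nonneg c) hε2.le)]
    have h8 : 2*c + c^2/9 + 1 ≤ c^2 := by nlinarith
    have key : (1 + c * ε ^ 2) ^ 2 < 1 + c ^ 2 * ε ^ 2 := by
      nlinarith [mul_le_mul_of_nonneg_right h8 hε2.le, h9', hε2]
    set m := n / 2 with hm
    have hm2 : 2 ≤ m := by omega
    have hle : (n:ℝ) / 2 ≤ (m:ℝ) + 1 := by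
      have h2 : n ≤ 2 * m + 2 := by omega
      have : (n:ℝ) ≤ 2 * (m:ℝ) + 2 := by exact_mod_cast h2
      linarith
    have step1 : (1 + c * ε ^ 2) ^ ((n:ℝ)/2) ≤ (1 + c * ε ^ 2) ^ ((m:ℝ) + 1) :=
      Real.rpow_le_rpow_of_exponent_le ha1 hle
    have step2 : (1 + c * ε ^ 2) ^ ((m:ℝ) + 1) = (1 + c * ε ^ 2) ^ (m + 1) := by
      rw [← Real.rpow_natCast (1 + c * ε ^ 2) (m+1)]
      push_cast
      ring_nf
    have step3 : (1 + c * ε ^ 2) ^ (m + 1) < (1 + c ^ 2 * ε ^ 2) ^ m := by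
      calc (1 + c * ε ^ 2) ^ (m + 1)
          = (1 + c * ε ^ 2) ^ (m - 1) * (1 + c * ε ^ 2) ^ 2 := by
            rw [← pow_add]; congr 1; omega
        _ < (1 + c ^ 2 * ε ^ 2) ^ (m - 1) * (1 + c ^ 2 * ε ^ 2) := by
            apply mul_lt_mul' (pow_le_pow_left₀ (by linarith) hab _) key
              (by positivity) (by positivity)
        _ = (1 + c ^ 2 * ε ^ 2) ^ m := by
            rw [← pow_succ]; congr 1; omega
    calc (1 + c * ε ^ 2) ^ ((n:ℝ)/2) ≤ (1 + c * ε ^ 2) ^ ((m:ℝ) + 1) := step1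
      _ = (1 + c * ε ^ 2) ^ (m + 1) := step2
      _ < (1 + c ^ 2 * ε ^ 2) ^ m := step3
end
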